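/- arXiv:math/0703582 — 6 statements merged into one kernel-verified Lean document; each statement's English description precedes it below -/
import Mathlib

section
/- Let A and B be unital C*-algebras, E a Hilbert A-module and F a Hilbert B-module. If {u_i}_{i∈I} is an orthonormal basis for E and {v_j}_{j∈J} is an orthonormal basis for F, then {u_i ⊗ v_j}_{i∈I, j∈J} is an orthonormal basis for the exterior tensor product E⊗F (a Hilbert A⊗B-module). -/
/-- The right-module version of `CStarModule` from the older Mathlib (Dec 2024): a right
`A`-module (via `Aᵐᵒᵖ`), with inner product linear in the second variable. -/
class CStarModuleRight (A E : Type*) [NonUnitalSemiring A] [StarRing A] [Module ℂ A]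
    [AddCommGroup E] [Module ℂ E] [PartialOrder A] [SMul Aᵐᵒᵖ E] [Norm A] [Norm E]
    extends Inner A E where
  inner_add_right {x} {y} {z} : inner x (y + z) = inner x y + inner x z
  inner_self_nonneg {x} : 0 ≤ inner x x
  inner_self {x} : inner x x = 0 ↔ x = 0
  inner_op_smul_right {a : A} {x y : E} : inner x (MulOpposite.op a • y) = inner x y * a
  inner_smul_right_complex {z : ℂ} {x} {y} : inner x (z • y) = z • inner x y
  star_inner x y : star (inner x y) = inner y x
  norm_eq_sqrt_norm_inner_self x : ‖x‖ = √‖inner x x‖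

/-!
Everything is computed on elementary tensors, where `⟪x ⊗ y, x' ⊗ y'⟫ = ⟪x, x'⟫ ⊗ ⟪y, y'⟫`.
This gives orthogonality at once, and shows that `e ⊗ f` is a projection with
`(e ⊗ f)(a ⊗ b)(e ⊗ f) ∈ ℂ (e ⊗ f)`; as `ℂ (e ⊗ f)` is closed and the `a ⊗ b` span a dense
subspace of `A ⊗ B`, the product of minimal projections is minimal.
For density, the submodule generated by the `u i ⊗ v j` contains `x ⊗ y` whenever `x` and `y`
lie in the submodules generated by the bases; since `‖x ⊗ y‖ = ‖x‖ ‖y‖`, the tensor map is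
continuous, so every elementary tensor lies in the closure, and these span a dense subspace.
-/

open Submodule

def IsMinimalProjection {A : Type*} [Mul A] [Star A] [SMul ℂ A] (e : A) : Prop :=
  IsIdempotentElem e ∧ IsSelfAdjoint e ∧ ∀ a : A, ∃ c : ℂ, e * a * e = c • e

theorem mul_mul_mem_span_singleton_of_dense {C : Type*} [NormedRing C] [NormedAlgebra ℂ C]
    {e : C} {s : Set C} (hs : Dense (span ℂ s : Set C))
    (he : ∀ c ∈ s, e * c * e ∈ span ℂ {e}) (c : C) : e * c * e ∈ span ℂ {e} := by
  let K := (span ℂ {e}).comap (ContinuousLinearMap.mulLeftRight ℂ C e e).toLinearMap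
  have hK : IsClosed (K : Set C) :=
    (span ℂ {e}).closed_of_finiteDimensional.preimage (ContinuousLinearMap.continuous _)
  exact hs.induction (fun c hc => (span_le (p := K)).mpr he hc) hK c

theorem IsMinimalProjection.map₂ {A B C : Type*} [Semiring A] [StarRing A] [Module ℂ A]
    [Semiring B] [StarRing B] [Module ℂ B] [NormedRing C] [StarRing C] [NormedAlgebra ℂ C]
    (m : A →ₗ[ℂ] B →ₗ[ℂ] C)
    (hm_mul : ∀ (a a' : A) (b b' : B), m (a * a') (b * b') = m a b * m a' b')
    (hm_star : ∀ (a : A) (b : B), star (m a b) = m (star a) (star b))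
    (hm_dense : Dense (span ℂ {c : C | ∃ a b, m a b = c} : Set C))
    {e : A} {f : B} (he : IsMinimalProjection e) (hf : IsMinimalProjection f) :
    IsMinimalProjection (m e f) := by
  obtain ⟨he_idem, he_sa, he_min⟩ := he
  obtain ⟨hf_idem, hf_sa, hf_min⟩ := hf
  refine ⟨by rw [IsIdempotentElem, ← hm_mul, he_idem, hf_idem],
    by rw [IsSelfAdjoint, hm_star, he_sa.star_eq, hf_sa.star_eq], fun c => ?_⟩
  suffices m e f * c * m e f ∈ span ℂ {m e f} by
    obtain ⟨z, hz⟩ := mem_span_singleton.mp this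
    exact ⟨z, hz.symm⟩
  refine mul_mul_mem_span_singleton_of_dense hm_dense ?_ c
  rintro _ ⟨a, b, rfl⟩
  obtain ⟨z, hz⟩ := he_min a
  obtain ⟨w, hw⟩ := hf_min b
  rw [← hm_mul, ← hm_mul, hz, hw, map_smul, map_smul, LinearMap.smul_apply, smul_smul]
  exact smul_mem _ _ (mem_span_singleton_self _)

theorem norm_apply_apply_eq_norm_mul_norm {A B C E F T : Type*}
    [NonUnitalNormedRing A] [StarRing A] [NormedSpace ℂ A] [PartialOrder A]
    [NonUnitalNormedRing B] [StarRing B] [NormedSpace ℂ B] [PartialOrder B]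
    [NonUnitalNormedRing C] [StarRing C] [NormedSpace ℂ C] [PartialOrder C]
    (m : A →ₗ[ℂ] B →ₗ[ℂ] C) (hm_norm : ∀ (a : A) (b : B), ‖m a b‖ = ‖a‖ * ‖b‖)
    [AddCommGroup E] [Module ℂ E] [SMul Aᵐᵒᵖ E] [Norm E] [CStarModuleRight A E]
    [AddCommGroup F] [Module ℂ F] [SMul Bᵐᵒᵖ F] [Norm F] [CStarModuleRight B F]
    [AddCommGroup T] [Module ℂ T] [SMul Cᵐᵒᵖ T] [Norm T] [CStarModuleRight C T]
    (tm : E →ₗ[ℂ] F →ₗ[ℂ] T)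
    (htm_inner : ∀ (x x' : E) (y y' : F),
      (inner C (tm x y) (tm x' y') : C) = m (inner A x x' : A) (inner B y y' : B))
    (x : E) (y : F) : ‖tm x y‖ = ‖x‖ * ‖y‖ := by
  rw [CStarModuleRight.norm_eq_sqrt_norm_inner_self (A := C), htm_inner, hm_norm,
    Real.sqrt_mul (norm_nonneg _), ← CStarModuleRight.norm_eq_sqrt_norm_inner_self,
    ← CStarModuleRight.norm_eq_sqrt_norm_inner_self]

section Density

variable {R₁ R₂ R E F T : Type*} [Semiring R₁] [Semiring R₂] [Semiring R]
  [AddCommMonoid E] [Module R₁ E] [AddCommMonoid F] [Module R₂ F]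
  [AddCommMonoid T] [Module R T]

theorem map_mem_of_mem_span {G : Type*} [FunLike G E T] [AddMonoidHomClass G E T] {f : G}
    (hf : ∀ (a : R₁) (x : E), ∃ c : R, f (a • x) = c • f x) {S : Submodule R T} {s : Set E}
    (hs : ∀ x ∈ s, f x ∈ S) {x : E} (hx : x ∈ span R₁ s) : f x ∈ S := by
  induction hx using span_induction with
  | mem x hx => exact hs x hx
  | zero => rw [map_zero]; exact S.zero_mem
  | add x y _ _ hx hy => rw [map_add]; exact S.add_mem hx hy
  | smul a x _ hx =>
    obtain ⟨c, hc⟩ := hf a x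
    rw [hc]
    exact S.smul_mem c hx

theorem span_subset_of_smul_mem {s : Set T} (hs : ∀ (c : R) (x : T), x ∈ s → c • x ∈ s)
    {M : AddSubmonoid T} (hsM : s ⊆ M) : (span R s : Set T) ⊆ M := by
  rw [← coe_toAddSubmonoid, span_eq_closure]
  refine AddSubmonoid.closure_le.mpr ?_
  rintro _ ⟨c, -, x, hx, rfl⟩
  exact hsM (hs c x hx)

variable [Module ℂ E] [Module ℂ F] [Module ℂ T]
  [TopologicalSpace E] [TopologicalSpace F] [TopologicalSpace T] [ContinuousAdd T]

theorem dense_of_forall_apply_apply_mem {tm : E →ₗ[ℂ] F →ₗ[ℂ] T}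
    (htm_cont : Continuous (Function.uncurry fun x y => tm x y))
    (htm_dense : Dense (span ℂ {z : T | ∃ x y, tm x y = z} : Set T))
    (htm_left : ∀ (a : R₁) (x : E) (y : F), ∃ c : R, tm (a • x) y = c • tm x y)
    (htm_right : ∀ (b : R₂) (x : E) (y : F), ∃ c : R, tm x (b • y) = c • tm x y)
    {s : Set E} {t : Set F} (hs : Dense (span R₁ s : Set E)) (ht : Dense (span R₂ t : Set F))
    {S : Submodule R T} (hst : ∀ x ∈ s, ∀ y ∈ t, tm x y ∈ S) : Dense (S : Set T) := by
  have h_span : ∀ x ∈ span R₁ s, ∀ y ∈ span R₂ t, tm x y ∈ S := fun x hx y hy =>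
    map_mem_of_mem_span (f := tm.flip y) (fun a x => htm_left a x y)
      (fun x' hx' => map_mem_of_mem_span (htm_right · x') (hst x' hx') hy) hx
  have h_closure : ∀ x y, tm x y ∈ S.toAddSubmonoid.topologicalClosure := fun x y =>
    map_mem_closure₂ (f := fun x y => tm x y) htm_cont (hs.closure_eq ▸ Set.mem_univ x)
      (ht.closure_eq ▸ Set.mem_univ y) h_span
  -- The `ℂ`- and `R`-actions on `T` need not be compatible, so the closure of `S` is only
  -- known to be an additive submonoid; the elementary tensors, however, are closed under `ℂ`.
  refine dense_closure.mp (htm_dense.mono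
    (span_subset_of_smul_mem (M := S.toAddSubmonoid.topologicalClosure) ?_ ?_))
  · rintro c _ ⟨x, y, rfl⟩
    exact ⟨c • x, y, by rw [map_smul, LinearMap.smul_apply]⟩
  · rintro _ ⟨x, y, rfl⟩
    exact h_closure x y

end Density

theorem cstar_module_tensor_product_orthonormal_basis_general
    {A B C : Type*}
    [CStarAlgebra A] [PartialOrder A]
    [CStarAlgebra B] [PartialOrder B]
    [CStarAlgebra C] [PartialOrder C]
    -- the spatial tensor product `C = A ⊗ B`
    (m : A →ₗ[ℂ] B →ₗ[ℂ] C)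
    (hm_mul : ∀ (a a' : A) (b b' : B), m (a * a') (b * b') = m a b * m a' b')
    (hm_star : ∀ (a : A) (b : B), star (m a b) = m (star a) (star b))
    (hm_norm : ∀ (a : A) (b : B), ‖m a b‖ = ‖a‖ * ‖b‖)
    (hm_dense : Dense (Submodule.span ℂ {c : C | ∃ a b, m a b = c} : Set C))
    -- the Hilbert modules `E`, `F` and `T = E ⊗ F`
    {E F T : Type*}
    [NormedAddCommGroup E] [NormedSpace ℂ E] [Module Aᵐᵒᵖ E] [CStarModuleRight A E]
    [NormedAddCommGroup F] [NormedSpace ℂ F] [Module Bᵐᵒᵖ F] [CStarModuleRight B F]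
    [NormedAddCommGroup T] [NormedSpace ℂ T] [Module Cᵐᵒᵖ T] [CStarModuleRight C T]
    (tm : E →ₗ[ℂ] F →ₗ[ℂ] T)
    (htm_inner : ∀ (x x' : E) (y y' : F),
      (inner C (tm x y) (tm x' y') : C) = m (inner A x x' : A) (inner B y y' : B))
    (htm_dense : Dense (Submodule.span ℂ {z : T | ∃ x y, tm x y = z} : Set T))
    -- also: the module actions on the tensor product satisfy
    -- `(a ⊗ b) • (x ⊗ y) = (a • x) ⊗ (b • y)`
    (htm_smul : ∀ (a : A) (b : B) (x : E) (y : F),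
      MulOpposite.op (m a b) • tm x y = tm (MulOpposite.op a • x) (MulOpposite.op b • y))
    -- the orthonormal bases
    {I J : Type*} (u : I → E) (v : J → F)
    -- each `u i` is basic, i.e. `⟪u i, u i⟫` is a minimal projection in `A`
    (hu_basic : ∀ i, IsIdempotentElem (inner A (u i) (u i) : A) ∧
      IsSelfAdjoint (inner A (u i) (u i) : A) ∧
      ∀ a : A, ∃ c : ℂ,
        (inner A (u i) (u i) : A) * a * (inner A (u i) (u i) : A)
          = c • (inner A (u i) (u i) : A))
    (hu_orth : ∀ i i', i ≠ i' → (inner A (u i) (u i') : A) = 0)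
    (hu_dense : Dense (Submodule.span Aᵐᵒᵖ (Set.range u) : Set E))
    (hv_basic : ∀ j, IsIdempotentElem (inner B (v j) (v j) : B) ∧
      IsSelfAdjoint (inner B (v j) (v j) : B) ∧
      ∀ b : B, ∃ c : ℂ,
        (inner B (v j) (v j) : B) * b * (inner B (v j) (v j) : B)
          = c • (inner B (v j) (v j) : B))
    (hv_orth : ∀ j j', j ≠ j' → (inner B (v j) (v j') : B) = 0)
    (hv_dense : Dense (Submodule.span Bᵐᵒᵖ (Set.range v) : Set F)) :
    -- conclusion: `{u i ⊗ v j}` is an orthonormal basis for `E ⊗ F`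
    (∀ p : I × J,
      IsIdempotentElem (inner C (tm (u p.1) (v p.2)) (tm (u p.1) (v p.2)) : C) ∧
      IsSelfAdjoint (inner C (tm (u p.1) (v p.2)) (tm (u p.1) (v p.2)) : C) ∧
      ∀ c : C, ∃ c' : ℂ,
        (inner C (tm (u p.1) (v p.2)) (tm (u p.1) (v p.2)) : C) * c *
            (inner C (tm (u p.1) (v p.2)) (tm (u p.1) (v p.2)) : C)
          = c' • (inner C (tm (u p.1) (v p.2)) (tm (u p.1) (v p.2)) : C)) ∧
    (∀ p p' : I × J, p ≠ p' →
      (inner C (tm (u p.1) (v p.2)) (tm (u p'.1) (v p'.2)) : C) = 0) ∧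
    Dense (Submodule.span Cᵐᵒᵖ
      (Set.range fun p : I × J => tm (u p.1) (v p.2)) : Set T) := by
  have htm_cont : Continuous (Function.uncurry fun x y => tm x y) :=
    (tm.mkContinuous₂ 1 fun x y => by
      rw [norm_apply_apply_eq_norm_mul_norm m hm_norm tm htm_inner, one_mul]).continuous₂
  refine ⟨fun p => ?_, fun p p' hpp' => ?_, ?_⟩
  · rw [htm_inner]
    exact IsMinimalProjection.map₂ m hm_mul hm_star hm_dense (hu_basic p.1) (hv_basic p.2)
  · obtain ⟨i, j⟩ := p
    obtain ⟨i', j'⟩ := p'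
    rw [htm_inner]
    rcases eq_or_ne i i' with rfl | hii'
    · rw [hv_orth j j' fun hjj' => hpp' (hjj' ▸ rfl), map_zero]
    · rw [hu_orth i i' hii', map_zero, LinearMap.zero_apply]
  · refine dense_of_forall_apply_apply_mem htm_cont htm_dense (fun a x y => ?_) (fun b x y => ?_)
      hu_dense hv_dense ?_
    · refine ⟨MulOpposite.op (m a.unop 1), ?_⟩
      rw [htm_smul, MulOpposite.op_unop, MulOpposite.op_one, one_smul]
    · refine ⟨MulOpposite.op (m 1 b.unop), ?_⟩
      rw [htm_smul, MulOpposite.op_unop, MulOpposite.op_one, one_smul]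
    · rintro _ ⟨i, rfl⟩ _ ⟨j, rfl⟩
      exact subset_span ⟨(i, j), rfl⟩

/-- If `{u i}` is an orthonormal basis for the Hilbert `A`-module `E` and
`{v j}` is an orthonormal basis for the Hilbert `B`-module `F`, then `{u i ⊗ v j}` is an
orthonormal basis for the exterior tensor product `E ⊗ F` (a Hilbert module over the
spatial tensor product `A ⊗ B`).  A vector `x` is basic if `⟪x, x⟫` is a minimal
projection; an orthonormal basis is a pairwise-orthogonal family of basic vectors
generating a dense submodule. -/
theorem cstar_module_tensor_product_orthonormal_basis
    {A B C : Type*}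
    [CStarAlgebra A] [PartialOrder A] [StarOrderedRing A]
    [CStarAlgebra B] [PartialOrder B] [StarOrderedRing B]
    [CStarAlgebra C] [PartialOrder C] [StarOrderedRing C]
    -- the spatial tensor product `C = A ⊗ B`
    (m : A →ₗ[ℂ] B →ₗ[ℂ] C)
    (hm_mul : ∀ (a a' : A) (b b' : B), m (a * a') (b * b') = m a b * m a' b')
    (hm_star : ∀ (a : A) (b : B), star (m a b) = m (star a) (star b))
    (hm_one : m 1 1 = 1)
    (hm_norm : ∀ (a : A) (b : B), ‖m a b‖ = ‖a‖ * ‖b‖)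
    (hm_dense : Dense (Submodule.span ℂ {c : C | ∃ a b, m a b = c} : Set C))
    -- the Hilbert modules `E`, `F` and `T = E ⊗ F`
    {E F T : Type*}
    [NormedAddCommGroup E] [NormedSpace ℂ E] [Module Aᵐᵒᵖ E] [CStarModuleRight A E]
      [CompleteSpace E]
    [NormedAddCommGroup F] [NormedSpace ℂ F] [Module Bᵐᵒᵖ F] [CStarModuleRight B F]
      [CompleteSpace F]
    [NormedAddCommGroup T] [NormedSpace ℂ T] [Module Cᵐᵒᵖ T] [CStarModuleRight C T]
      [CompleteSpace T]
    (tm : E →ₗ[ℂ] F →ₗ[ℂ] T)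
    (htm_inner : ∀ (x x' : E) (y y' : F),
      (inner C (tm x y) (tm x' y') : C) = m (inner A x x' : A) (inner B y y' : B))
    (htm_dense : Dense (Submodule.span ℂ {z : T | ∃ x y, tm x y = z} : Set T))
    -- also: the module actions on the tensor product satisfy
    -- `(a ⊗ b) • (x ⊗ y) = (a • x) ⊗ (b • y)`
    (htm_smul : ∀ (a : A) (b : B) (x : E) (y : F),
      MulOpposite.op (m a b) • tm x y = tm (MulOpposite.op a • x) (MulOpposite.op b • y))
    -- the orthonormal bases
    {I J : Type*} (u : I → E) (v : J → F)
    -- each `u i` is basic, i.e. `⟪u i, u i⟫` is a minimal projection in `A`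
    (hu_basic : ∀ i, IsIdempotentElem (inner A (u i) (u i) : A) ∧
      IsSelfAdjoint (inner A (u i) (u i) : A) ∧
      ∀ a : A, ∃ c : ℂ,
        (inner A (u i) (u i) : A) * a * (inner A (u i) (u i) : A)
          = c • (inner A (u i) (u i) : A))
    (hu_orth : ∀ i i', i ≠ i' → (inner A (u i) (u i') : A) = 0)
    (hu_dense : Dense (Submodule.span Aᵐᵒᵖ (Set.range u) : Set E))
    (hv_basic : ∀ j, IsIdempotentElem (inner B (v j) (v j) : B) ∧
      IsSelfAdjoint (inner B (v j) (v j) : B) ∧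
      ∀ b : B, ∃ c : ℂ,
        (inner B (v j) (v j) : B) * b * (inner B (v j) (v j) : B)
          = c • (inner B (v j) (v j) : B))
    (hv_orth : ∀ j j', j ≠ j' → (inner B (v j) (v j') : B) = 0)
    (hv_dense : Dense (Submodule.span Bᵐᵒᵖ (Set.range v) : Set F)) :
    -- conclusion: `{u i ⊗ v j}` is an orthonormal basis for `E ⊗ F`
    (∀ p : I × J,
      IsIdempotentElem (inner C (tm (u p.1) (v p.2)) (tm (u p.1) (v p.2)) : C) ∧
      IsSelfAdjoint (inner C (tm (u p.1) (v p.2)) (tm (u p.1) (v p.2)) : C) ∧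
      ∀ c : C, ∃ c' : ℂ,
        (inner C (tm (u p.1) (v p.2)) (tm (u p.1) (v p.2)) : C) * c *
            (inner C (tm (u p.1) (v p.2)) (tm (u p.1) (v p.2)) : C)
          = c' • (inner C (tm (u p.1) (v p.2)) (tm (u p.1) (v p.2)) : C)) ∧
    (∀ p p' : I × J, p ≠ p' →
      (inner C (tm (u p.1) (v p.2)) (tm (u p'.1) (v p'.2)) : C) = 0) ∧
    Dense (Submodule.span Cᵐᵒᵖ
      (Set.range fun p : I × J => tm (u p.1) (v p.2)) : Set T) :=
  cstar_module_tensor_product_orthonormal_basis_general m hm_mul hm_star hm_norm hm_dense tm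
    htm_inner htm_dense htm_smul u v hu_basic hu_orth hu_dense hv_basic hv_orth hv_dense
end

section
/- Let X be a finitely or countably generated Hilbert A-module, let {x_i}_{i∈I} be a standard frame in X with frame operator S, and let Q ∈ End*_A(X) be invertible. Then {Qx_i}_{i∈I} is a frame in X with frame bounds A₀‖Q*^{-1}‖^{-2} and B₀‖Q*‖², where A₀, B₀ are frame bounds for {x_i}, and its frame operator is Q*^{-1} S Q^{-1} = (Q S^{-1} Q*)^{-1}; in particular Q S^{-1} Q*(x) = Σ_{i∈I} ⟨x, Qx_i⟩ Qx_i for every x ∈ X. -/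
/-!
Substituting `x ↦ Q* x` turns the frame sums of `{Q xᵢ}` into those of `{xᵢ}`, so the frame
bounds reduce to the operator inequality `⟪T x, T x⟫ ≤ ‖T‖² ⟪x, x⟫` for adjointable `T`. For
`c > ‖T‖²` the operator `u = c⁻¹ T* T` is self-adjoint of norm `< 1`, and `1 - u = R²` for a
self-adjoint `R` obtained from Banach's fixed point theorem, whence
`⟪x, x⟫ - c⁻¹ ⟪T x, T x⟫ = ⟪R x, R x⟫ ≥ 0`. The frame operator identities follow by applying `Q`
to the reconstruction formula `x = Σᵢ xᵢ ⟪S xᵢ, x⟫`, in which `S` is self-adjoint.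
-/

open scoped RightActions

/-- The Hilbert C⋆-module class as it stood in the older Mathlib: a right `A`-module
(action of `Aᵐᵒᵖ`), with inner product `A`-linear on the right in the sense
`⟪x, y <• a⟫ = ⟪x, y⟫ * a`. -/
class OldCStarModule (A : outParam <| Type*) (E : Type*) [NonUnitalSemiring A] [StarRing A]
    [Module ℂ A] [AddCommGroup E] [Module ℂ E] [PartialOrder A] [SMul Aᵐᵒᵖ E] [Norm A] [Norm E]
    extends Inner A E where
  inner_add_right {x} {y} {z} : inner x (y + z) = inner x y + inner x z
  inner_self_nonneg {x} : 0 ≤ inner x x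
  inner_self {x} : inner x x = 0 ↔ x = 0
  inner_op_smul_right {a : A} {x y : E} : inner x (y <• a) = inner x y * a
  inner_smul_right_complex {z : ℂ} {x} {y} : inner x (z • y) = z • inner x y
  star_inner x y : star (inner x y) = inner y x
  norm_eq_sqrt_norm_inner_self x : ‖x‖ = √‖inner x x‖

lemma hasSum_map_op_smul {I R A M N : Type*} [Semiring R] [AddCommMonoid M] [Module R M]
    [TopologicalSpace M] [AddCommMonoid N] [Module R N] [TopologicalSpace N]
    [SMul Aᵐᵒᵖ M] [SMul Aᵐᵒᵖ N] {T : M →L[R] N} (hT : ∀ (a : A) (x : M), T (x <• a) = T x <• a)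
    {f : I → M} {a : I → A} {s : M} (h : HasSum (fun i => f i <• a i) s) :
    HasSum (fun i => T (f i) <• a i) (T s) := by
  simpa only [hT] using T.hasSum h

open Metric Set in
lemma lipschitzOnWith_half_add_mul_self {𝔸 : Type*} [NormedRing 𝔸] [NormedAlgebra ℝ 𝔸]
    (u : 𝔸) (m : NNReal) :
    LipschitzOnWith m (fun y : 𝔸 => (2⁻¹ : ℝ) • (u + y * y)) (closedBall 0 m) := by
  refine LipschitzOnWith.of_dist_le_mul fun y hy z hz => ?_
  rw [mem_closedBall_zero_iff] at hy hz
  have hdiff : (2⁻¹ : ℝ) • (u + y * y) - (2⁻¹ : ℝ) • (u + z * z)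
      = (2⁻¹ : ℝ) • (y * (y - z) + (y - z) * z) := by
    rw [← smul_sub]; congr 1; noncomm_ring
  rw [dist_eq_norm, dist_eq_norm, hdiff, norm_smul, Real.norm_of_nonneg (by norm_num)]
  calc 2⁻¹ * ‖y * (y - z) + (y - z) * z‖
      ≤ 2⁻¹ * (‖y‖ * ‖y - z‖ + ‖y - z‖ * ‖z‖) := by
        gcongr
        exact (norm_add_le _ _).trans (add_le_add (norm_mul_le _ _) (norm_mul_le _ _))
    _ ≤ 2⁻¹ * (m * ‖y - z‖ + ‖y - z‖ * m) := by gcongr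
    _ = m * ‖y - z‖ := by ring

open Metric Set in
lemma mapsTo_half_add_mul_self_closedBall {𝔸 : Type*} [NormedRing 𝔸] [NormedAlgebra ℝ 𝔸]
    {u : 𝔸} {m : ℝ} (hm : ‖u‖ + m ^ 2 ≤ 2 * m) :
    MapsTo (fun y : 𝔸 => (2⁻¹ : ℝ) • (u + y * y)) (closedBall 0 m) (closedBall 0 m) := by
  intro y hy
  rw [mem_closedBall_zero_iff] at hy ⊢
  calc ‖(2⁻¹ : ℝ) • (u + y * y)‖ ≤ 2⁻¹ * (‖u‖ + ‖y‖ * ‖y‖) := by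
        rw [norm_smul, Real.norm_of_nonneg (by norm_num)]
        gcongr
        exact (norm_add_le _ _).trans (add_le_add le_rfl (norm_mul_le _ _))
    _ ≤ 2⁻¹ * (‖u‖ + m ^ 2) := by gcongr; nlinarith [norm_nonneg y]
    _ ≤ m := by linarith

open MulOpposite

namespace OldCStarModule

variable {A : Type*} [CStarAlgebra A] [PartialOrder A]
  {X : Type*} [NormedAddCommGroup X] [NormedSpace ℂ X] [Module Aᵐᵒᵖ X] [OldCStarModule A X]

local notation "⟪" x ", " y "⟫" => inner A x y

/-- Mathlib's Hilbert C⋆-modules are left modules with `⟪x, a • y⟫ = a * ⟪x, y⟫`; with the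
`Aᵐᵒᵖ`-valued inner product `op ⟪x, y⟫` a right Hilbert `A`-module becomes one, so that Mathlib's
basic theory (Cauchy–Schwarz, continuity of the inner product) applies. -/
instance toCStarModuleMulOpposite : CStarModule Aᵐᵒᵖ X where
  inner x y := op ⟪x, y⟫
  inner_add_right := congrArg op OldCStarModule.inner_add_right
  inner_self_nonneg := op_nonneg.2 OldCStarModule.inner_self_nonneg
  inner_self := (op_eq_zero_iff _).trans OldCStarModule.inner_self
  inner_op_smul_right := congrArg op OldCStarModule.inner_op_smul_right
  inner_smul_right_complex := congrArg op OldCStarModule.inner_smul_right_complex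
  star_inner x y := congrArg op (OldCStarModule.star_inner x y)
  norm_eq_sqrt_norm_inner_self := OldCStarModule.norm_eq_sqrt_norm_inner_self

lemma inner_add_left {x y z : X} : ⟪x + y, z⟫ = ⟪x, z⟫ + ⟪y, z⟫ :=
  op_injective (CStarModule.inner_add_left (A := Aᵐᵒᵖ) (x := x) (y := y) (z := z))

lemma inner_sub_left {x y z : X} : ⟪x - y, z⟫ = ⟪x, z⟫ - ⟪y, z⟫ :=
  op_injective (CStarModule.inner_sub_left (A := Aᵐᵒᵖ) (x := x) (y := y) (z := z))

lemma inner_sub_right {x y z : X} : ⟪x, y - z⟫ = ⟪x, y⟫ - ⟪x, z⟫ :=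
  op_injective (CStarModule.inner_sub_right (A := Aᵐᵒᵖ) (x := x) (y := y) (z := z))

lemma inner_smul_left_real {r : ℝ} {x y : X} : ⟪r • x, y⟫ = r • ⟪x, y⟫ :=
  op_injective (CStarModule.inner_smul_left_real (A := Aᵐᵒᵖ) (z := r) (x := x) (y := y))

lemma inner_smul_right_real {r : ℝ} {x y : X} : ⟪x, r • y⟫ = r • ⟪x, y⟫ :=
  op_injective (CStarModule.inner_smul_right_real (A := Aᵐᵒᵖ) (z := r) (x := x) (y := y))

lemma norm_sq_eq {x : X} : ‖x‖ ^ 2 = ‖⟪x, x⟫‖ := CStarModule.norm_sq_eq (A := Aᵐᵒᵖ) (x := x)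

variable (A) in
def IsAdjointPair (T T' : X →L[ℂ] X) : Prop := ∀ x y, ⟪T x, y⟫ = ⟪x, T' y⟫

namespace IsAdjointPair

variable {T T' S S' : X →L[ℂ] X}

lemma symm (h : IsAdjointPair A T T') : IsAdjointPair A T' T := fun x y => by
  rw [← OldCStarModule.star_inner, ← h, OldCStarModule.star_inner]

lemma one : IsAdjointPair A (1 : X →L[ℂ] X) 1 := fun _ _ => rfl

lemma add (hT : IsAdjointPair A T T') (hS : IsAdjointPair A S S') :
    IsAdjointPair A (T + S) (T' + S') := fun x y => by
  simp only [add_apply, inner_add_left, OldCStarModule.inner_add_right, hT x y, hS x y]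

lemma sub (hT : IsAdjointPair A T T') (hS : IsAdjointPair A S S') :
    IsAdjointPair A (T - S) (T' - S') := fun x y => by
  simp only [sub_apply, inner_sub_left, inner_sub_right, hT x y, hS x y]

lemma zero : IsAdjointPair A (0 : X →L[ℂ] X) 0 := by
  simpa only [sub_self] using (one (A := A) (X := X)).sub one

lemma smul (h : IsAdjointPair A T T') (r : ℝ) : IsAdjointPair A (r • T) (r • T') := fun x y => by
  simp only [smul_apply, inner_smul_left_real, inner_smul_right_real, h x y]

lemma mul (hT : IsAdjointPair A T T') (hS : IsAdjointPair A S S') :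
    IsAdjointPair A (T * S) (S' * T') := fun x y =>
  (hT (S x) y).trans (hS x (T' y))

lemma of_rightInverse (h : IsAdjointPair A T T') {Tinv T'inv : X →L[ℂ] X}
    (hT : ∀ x, T (Tinv x) = x) (hT' : ∀ x, T' (T'inv x) = x) :
    IsAdjointPair A Tinv T'inv := fun x y => by
  conv_lhs => rw [← hT' y]
  rw [← h, hT]

end IsAdjointPair

variable [StarOrderedRing A]

lemma norm_inner_le {x y : X} : ‖⟪x, y⟫‖ ≤ ‖x‖ * ‖y‖ := CStarModule.norm_inner_le (A := Aᵐᵒᵖ) X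

@[fun_prop]
lemma _root_.Continuous.oldCStarModule_inner {α : Type*} [TopologicalSpace α] {f g : α → X}
    (hf : Continuous f) (hg : Continuous g) : Continuous fun t => ⟪f t, g t⟫ :=
  continuous_unop.comp (CStarModule.continuous_inner (A := Aᵐᵒᵖ) |>.comp (hf.prodMk hg))

lemma _root_.HasSum.oldCStarModule_inner_left {I : Type*} {f : I → X} {s : X} (h : HasSum f s)
    (w : X) : HasSum (fun i => ⟪w, f i⟫) ⟪w, s⟫ :=
  ((CStarModule.innerSL (A := Aᵐᵒᵖ) w).hasSum h).unop

lemma isClosed_setOf_isAdjointPair_self : IsClosed {T : X →L[ℂ] X | IsAdjointPair A T T} := by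
  simp only [IsAdjointPair, Set.ofPred_forall]
  exact isClosed_iInter fun x => isClosed_iInter fun y => isClosed_eq (by fun_prop) (by fun_prop)

lemma isAdjointPair_self_of_reconstruction {I : Type*} {xs : I → X} {S : X →L[ℂ] X}
    (hS_mod : ∀ (a : A) (x : X), S (x <• a) = S x <• a)
    (hS : ∀ x, HasSum (fun i => xs i <• ⟪S (xs i), x⟫) x) : IsAdjointPair A S S := fun v w => by
  have hsum : ∀ v w, HasSum (fun i => ⟪v, S (xs i)⟫ * ⟪S (xs i), w⟫) ⟪v, S w⟫ := fun v w => by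
    simpa only [OldCStarModule.inner_op_smul_right] using
      (hasSum_map_op_smul hS_mod (hS w)).oldCStarModule_inner_left v
  have hsum_star := (hsum w v).star
  simp only [star_mul, OldCStarModule.star_inner] at hsum_star
  exact hsum_star.unique (hsum v w)

namespace IsAdjointPair

variable {T T' : X →L[ℂ] X}

lemma norm_apply_le (h : IsAdjointPair A T T') (x : X) : ‖T' x‖ ≤ ‖T‖ * ‖x‖ := by
  have hsq : ‖T' x‖ ^ 2 ≤ ‖T‖ * ‖x‖ * ‖T' x‖ := calc
    ‖T' x‖ ^ 2 = ‖⟪T (T' x), x⟫‖ := by rw [norm_sq_eq, h]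
    _ ≤ ‖T (T' x)‖ * ‖x‖ := norm_inner_le
    _ ≤ ‖T‖ * ‖T' x‖ * ‖x‖ := by gcongr; exact T.le_opNorm _
    _ = ‖T‖ * ‖x‖ * ‖T' x‖ := by ring
  nlinarith [norm_nonneg (T' x), mul_nonneg (norm_nonneg T) (norm_nonneg x)]

lemma norm_mul_le (h : IsAdjointPair A T T') : ‖T' * T‖ ≤ ‖T‖ ^ 2 :=
  calc ‖T' * T‖ ≤ ‖T'‖ * ‖T‖ := _root_.norm_mul_le _ _
    _ ≤ ‖T‖ * ‖T‖ := by gcongr; exact T'.opNorm_le_bound (norm_nonneg _) h.norm_apply_le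
    _ = ‖T‖ ^ 2 := (sq _).symm

end IsAdjointPair

variable [CompleteSpace X]

open Metric Set in
lemma exists_isAdjointPair_self_mul_self_eq_one_sub {u : X →L[ℂ] X} (hu : IsAdjointPair A u u)
    (hu_lt : ‖u‖ < 1) : ∃ R : X →L[ℂ] X, IsAdjointPair A R R ∧ R * R = 1 - u := by
  -- `R = 1 - z` with `z = (u + z²) / 2`; for `m = (1 + ‖u‖) / 2` this map sends the self-adjoint
  -- operators of norm `≤ m` into themselves and is an `m`-contraction there.
  obtain ⟨m, hm_def⟩ : ∃ m : NNReal, (m : ℝ) = (1 + ‖u‖) / 2 := ⟨⟨_, by positivity⟩, rfl⟩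
  set F : (X →L[ℂ] X) → X →L[ℂ] X := fun y => (2⁻¹ : ℝ) • (u + y * y)
  set M := closedBall (0 : X →L[ℂ] X) m ∩ {y | IsAdjointPair A y y}
  have hm : ‖u‖ + (m : ℝ) ^ 2 ≤ 2 * m := by
    rw [hm_def]; nlinarith [norm_nonneg u]
  have hFM : MapsTo F M M := fun y ⟨hy, hy_adj⟩ =>
    ⟨mapsTo_half_add_mul_self_closedBall hm hy, (hu.add (hy_adj.mul hy_adj)).smul _⟩
  have hF : ContractingWith m (hFM.restrict F M M) :=
    ⟨by rw [← NNReal.coe_lt_coe, hm_def, NNReal.coe_one]; linarith,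
      ((lipschitzOnWith_half_add_mul_self u m).mono inter_subset_left).mapsToRestrict hFM⟩
  obtain ⟨z, ⟨-, hz_adj⟩, hz, -⟩ := ContractingWith.exists_fixedPoint'
    (isClosed_closedBall.inter isClosed_setOf_isAdjointPair_self).isComplete hFM hF
    (x := 0) ⟨by simp, IsAdjointPair.zero⟩ (edist_ne_top _ _)
  have hz_sq : u + z * z = (2 : ℝ) • z := calc
    u + z * z = (2 : ℝ) • F z := by simp only [F, smul_smul]; norm_num
    _ = (2 : ℝ) • z := by rw [hz.eq]
  refine ⟨1 - z, IsAdjointPair.one.sub hz_adj, ?_⟩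
  calc (1 - z) * (1 - z) = 1 - (2 : ℝ) • z + z * z := by rw [two_smul]; noncomm_ring
    _ = 1 - u := by rw [← hz_sq]; abel

lemma inner_apply_self_le_inner_self {u : X →L[ℂ] X} (hu : IsAdjointPair A u u) (hu_lt : ‖u‖ < 1)
    (x : X) : ⟪x, u x⟫ ≤ ⟪x, x⟫ := by
  obtain ⟨R, hR, hR_sq⟩ := exists_isAdjointPair_self_mul_self_eq_one_sub hu hu_lt
  have h : ⟪R x, R x⟫ = ⟪x, x⟫ - ⟪x, u x⟫ := calc
    ⟪R x, R x⟫ = ⟪x, (R * R) x⟫ := hR x (R x)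
    _ = ⟪x, x⟫ - ⟪x, u x⟫ := by rw [hR_sq, sub_apply, one_apply_eq_self, inner_sub_right]
  exact sub_nonneg.1 (h ▸ OldCStarModule.inner_self_nonneg)

lemma IsAdjointPair.inner_apply_self_le {T T' : X →L[ℂ] X} (h : IsAdjointPair A T T') (x : X) :
    ⟪T x, T x⟫ ≤ ‖T‖ ^ 2 • ⟪x, x⟫ := by
  have hlt : ∀ c : ℝ, ‖T‖ ^ 2 < c → ⟪T x, T x⟫ ≤ c • ⟪x, x⟫ := by
    intro c hc
    have hc0 : 0 < c := (sq_nonneg _).trans_lt hc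
    have hu : IsAdjointPair A (c⁻¹ • (T' * T)) (c⁻¹ • (T' * T)) := (h.symm.mul h).smul _
    have hu_lt : ‖c⁻¹ • (T' * T)‖ < 1 := by
      rw [norm_smul, Real.norm_of_nonneg (inv_nonneg.2 hc0.le), inv_mul_lt_iff₀ hc0, mul_one]
      exact h.norm_mul_le.trans_lt hc
    have key := inner_apply_self_le_inner_self hu hu_lt x
    rwa [smul_apply, mul_apply_eq_comp, inner_smul_right_real, ← h,
      inv_smul_le_iff_of_pos hc0] at key
  refine ge_of_tendsto (x := nhdsWithin (‖T‖ ^ 2) (Set.Ioi (‖T‖ ^ 2))) ?_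
    (eventually_nhdsWithin_of_forall hlt)
  exact ((continuous_id.smul continuous_const).tendsto _).mono_left nhdsWithin_le_nhds

lemma IsAdjointPair.div_norm_sq_smul_inner_apply_self_le {T T' : X →L[ℂ] X}
    (h : IsAdjointPair A T T') {c : ℝ} (hc : 0 ≤ c) (x : X) :
    (c / ‖T‖ ^ 2) • ⟪T x, T x⟫ ≤ c • ⟪x, x⟫ := by
  rcases eq_or_ne ‖T‖ 0 with hT | hT
  · simpa [hT] using smul_nonneg hc OldCStarModule.inner_self_nonneg
  · calc (c / ‖T‖ ^ 2) • ⟪T x, T x⟫ ≤ (c / ‖T‖ ^ 2) • ‖T‖ ^ 2 • ⟪x, x⟫ :=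
          smul_le_smul_of_nonneg_left (h.inner_apply_self_le x) (by positivity)
      _ = c • ⟪x, x⟫ := by rw [smul_smul, div_mul_cancel₀ _ (pow_ne_zero 2 hT)]

end OldCStarModule

theorem cstar_module_frame_under_invertible_operator_general
    {A : Type*} [CStarAlgebra A] [PartialOrder A] [StarOrderedRing A]
    {X : Type*}
    [NormedAddCommGroup X] [NormedSpace ℂ X] [Module Aᵐᵒᵖ X] [OldCStarModule A X]
      [CompleteSpace X]
    {I : Type*}
    -- the standard frame
    (xs : I → X) (A₀ B₀ : ℝ) (hA₀ : 0 < A₀) (hAB₀ : A₀ ≤ B₀)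
    (hxs_sum : ∀ x : X, Summable fun i => (inner A x (xs i) : A) * (inner A (xs i) x : A))
    (hxs_lower : ∀ x : X,
      A₀ • (inner A x x : A) ≤ ∑' i, (inner A x (xs i) : A) * (inner A (xs i) x : A))
    (hxs_upper : ∀ x : X,
      ∑' i, (inner A x (xs i) : A) * (inner A (xs i) x : A) ≤ B₀ • (inner A x x : A))
    -- the frame operator `S`, with inverse `Sinv`
    (S : X →L[ℂ] X) (Sinv : X →L[ℂ] X)
    (hS_mod : ∀ (a : A) (x : X), S (x <• a) = S x <• a)
    (hS_inv : ∀ x, Sinv (S x) = x) (hS_inv' : ∀ x, S (Sinv x) = x)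
    (hS : ∀ x : X, HasSum (fun i => xs i <• (inner A (S (xs i)) x : A)) x)
    -- the invertible adjointable operator `Q`, with adjoint `Qadj`, inverse `Qinv`,
    -- and `Qadjinv = (Q*)⁻¹`
    (Q Qinv Qadj Qadjinv : X →L[ℂ] X)
    (hQ_mod : ∀ (a : A) (x : X), Q (x <• a) = Q x <• a)
    (hQ_adj : ∀ x x' : X, (inner A (Q x) x' : A) = inner A x (Qadj x'))
    (hQ_inv : ∀ x, Qinv (Q x) = x) (hQ_inv' : ∀ x, Q (Qinv x) = x)
    (hQadj_inv : ∀ x, Qadjinv (Qadj x) = x) (hQadj_inv' : ∀ x, Qadj (Qadjinv x) = x) :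
    -- conclusion (1): `{Q (x i)}` is a frame with bounds `A₀‖Q*⁻¹‖⁻²` and `B₀‖Q*‖²`
    (∀ x : X,
      Summable (fun i => (inner A x (Q (xs i)) : A) * (inner A (Q (xs i)) x : A)) ∧
      (A₀ / ‖Qadjinv‖ ^ 2) • (inner A x x : A)
        ≤ ∑' i, (inner A x (Q (xs i)) : A) * (inner A (Q (xs i)) x : A) ∧
      ∑' i, (inner A x (Q (xs i)) : A) * (inner A (Q (xs i)) x : A)
        ≤ (B₀ * ‖Qadj‖ ^ 2) • (inner A x x : A)) ∧
    -- conclusion (2): its frame operator is `Q*⁻¹ S Q⁻¹ …`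
    (∀ x : X, HasSum
      (fun i => Q (xs i) <• (inner A (Qadjinv (S (Qinv (Q (xs i))))) x : A)) x) ∧
    -- … which equals `(Q S⁻¹ Q*)⁻¹`
    (∀ x : X, Qadjinv (S (Qinv (Q (Sinv (Qadj x))))) = x) ∧
    (∀ x : X, Q (Sinv (Qadj (Qadjinv (S (Qinv x))))) = x) ∧
    -- conclusion (3): `Q S⁻¹ Q* x = Σᵢ ⟨x, Q xᵢ⟩ (Q xᵢ)`
    (∀ x : X, HasSum (fun i => Q (xs i) <• (inner A (Q (xs i)) x : A))
      (Q (Sinv (Qadj x)))) := by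
  have hQ : OldCStarModule.IsAdjointPair A Q Qadj := hQ_adj
  have hQinv : OldCStarModule.IsAdjointPair A Qinv Qadjinv :=
    hQ.of_rightInverse hQ_inv' hQadj_inv'
  have hS_adj := OldCStarModule.isAdjointPair_self_of_reconstruction hS_mod hS
  have hterm : ∀ x, (fun i => (inner A x (Q (xs i)) : A) * inner A (Q (xs i)) x) =
      fun i => (inner A (Qadj x) (xs i) : A) * inner A (xs i) (Qadj x) :=
    fun x => funext fun i => by rw [hQ.symm, hQ]
  refine ⟨fun x => ?_, fun x => ?_, fun x => by rw [hQ_inv, hS_inv', hQadj_inv],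
    fun x => by rw [hQadj_inv', hS_inv, hQ_inv'], fun x => ?_⟩
  · rw [hterm x]
    refine ⟨hxs_sum _, ?_, (hxs_upper _).trans ?_⟩
    · calc (A₀ / ‖Qadjinv‖ ^ 2) • (inner A x x : A)
          = (A₀ / ‖Qadjinv‖ ^ 2) • inner A (Qadjinv (Qadj x)) (Qadjinv (Qadj x)) := by
            rw [hQadj_inv]
        _ ≤ A₀ • inner A (Qadj x) (Qadj x) :=
            hQinv.symm.div_norm_sq_smul_inner_apply_self_le hA₀.le _
        _ ≤ _ := hxs_lower _
    · rw [mul_smul]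
      exact smul_le_smul_of_nonneg_left (hQ.symm.inner_apply_self_le x) (hA₀.le.trans hAB₀)
  · simpa only [hQ_inv, hQinv.symm _ x, hQ_inv'] using hasSum_map_op_smul hQ_mod (hS (Qinv x))
  · simpa only [hS_adj _ (Sinv _), hS_inv', hQ _ x] using
      hasSum_map_op_smul hQ_mod (hS (Sinv (Qadj x)))

/-- If `{x i}` is a standard frame with bounds `A₀, B₀` and frame operator
`S` in a Hilbert `A`-module `X` and `Q ∈ End*_A(X)` is invertible (with adjoint `Q*`,
inverse `Q⁻¹`, and `(Q*)⁻¹ = (Q⁻¹)*`), then `{Q (x i)}` is a frame in `X` with bounds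
`A₀‖Q*⁻¹‖⁻²` and `B₀‖Q*‖²`, with frame operator `Q*⁻¹ S Q⁻¹ = (Q S⁻¹ Q*)⁻¹`; in
particular `Q S⁻¹ Q* x = Σᵢ ⟨x, Q xᵢ⟩ (Q xᵢ)` for every `x ∈ X`.  (Mathlib's convention
for the `A`-valued inner product is conjugate-linear in the first variable, and the
`A`-module action is written as a right action.) -/
theorem cstar_module_frame_under_invertible_operator
    {A : Type*} [CStarAlgebra A] [PartialOrder A] [StarOrderedRing A]
    {X : Type*}
    [NormedAddCommGroup X] [NormedSpace ℂ X] [Module Aᵐᵒᵖ X] [OldCStarModule A X]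
      [CompleteSpace X]
    {I : Type*} [Countable I]
    -- the standard frame
    (xs : I → X) (A₀ B₀ : ℝ) (hA₀ : 0 < A₀) (hAB₀ : A₀ ≤ B₀)
    (hxs_sum : ∀ x : X, Summable fun i => (inner A x (xs i) : A) * (inner A (xs i) x : A))
    (hxs_lower : ∀ x : X,
      A₀ • (inner A x x : A) ≤ ∑' i, (inner A x (xs i) : A) * (inner A (xs i) x : A))
    (hxs_upper : ∀ x : X,
      ∑' i, (inner A x (xs i) : A) * (inner A (xs i) x : A) ≤ B₀ • (inner A x x : A))
    -- the frame operator `S`, with inverse `Sinv`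
    (S : X →L[ℂ] X) (Sinv : X →L[ℂ] X)
    (hS_mod : ∀ (a : A) (x : X), S (x <• a) = S x <• a)
    (hS_inv : ∀ x, Sinv (S x) = x) (hS_inv' : ∀ x, S (Sinv x) = x)
    (hS : ∀ x : X, HasSum (fun i => xs i <• (inner A (S (xs i)) x : A)) x)
    -- the invertible adjointable operator `Q`, with adjoint `Qadj`, inverse `Qinv`,
    -- and `Qadjinv = (Q*)⁻¹`
    (Q Qinv Qadj Qadjinv : X →L[ℂ] X)
    (hQ_mod : ∀ (a : A) (x : X), Q (x <• a) = Q x <• a)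
    (hQ_adj : ∀ x x' : X, (inner A (Q x) x' : A) = inner A x (Qadj x'))
    (hQ_inv : ∀ x, Qinv (Q x) = x) (hQ_inv' : ∀ x, Q (Qinv x) = x)
    (hQadj_inv : ∀ x, Qadjinv (Qadj x) = x) (hQadj_inv' : ∀ x, Qadj (Qadjinv x) = x) :
    -- conclusion (1): `{Q (x i)}` is a frame with bounds `A₀‖Q*⁻¹‖⁻²` and `B₀‖Q*‖²`
    (∀ x : X,
      Summable (fun i => (inner A x (Q (xs i)) : A) * (inner A (Q (xs i)) x : A)) ∧
      (A₀ / ‖Qadjinv‖ ^ 2) • (inner A x x : A)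
        ≤ ∑' i, (inner A x (Q (xs i)) : A) * (inner A (Q (xs i)) x : A) ∧
      ∑' i, (inner A x (Q (xs i)) : A) * (inner A (Q (xs i)) x : A)
        ≤ (B₀ * ‖Qadj‖ ^ 2) • (inner A x x : A)) ∧
    -- conclusion (2): its frame operator is `Q*⁻¹ S Q⁻¹ …`
    (∀ x : X, HasSum
      (fun i => Q (xs i) <• (inner A (Qadjinv (S (Qinv (Q (xs i))))) x : A)) x) ∧
    -- … which equals `(Q S⁻¹ Q*)⁻¹`
    (∀ x : X, Qadjinv (S (Qinv (Q (Sinv (Qadj x))))) = x) ∧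
    (∀ x : X, Q (Sinv (Qadj (Qadjinv (S (Qinv x))))) = x) ∧
    -- conclusion (3): `Q S⁻¹ Q* x = Σᵢ ⟨x, Q xᵢ⟩ (Q xᵢ)`
    (∀ x : X, HasSum (fun i => Q (xs i) <• (inner A (Q (xs i)) x : A))
      (Q (Sinv (Qadj x)))) :=
  cstar_module_frame_under_invertible_operator_general xs A₀ B₀ hA₀ hAB₀ hxs_sum hxs_lower hxs_upper
    S Sinv hS_mod hS_inv hS_inv' hS Q Qinv Qadj Qadjinv hQ_mod hQ_adj hQ_inv hQ_inv' hQadj_inv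
    hQadj_inv'
end

section
/- Let E be a Hilbert A-module and F a Hilbert B-module, let Q ∈ End*_A(E) be an invertible A-linear map, and let {T_i}_{i∈J} be a standard frame in the exterior tensor product E⊗F with frame operator S. Then {(Q*⊗I)(T_i)}_{i∈J} is a frame of E⊗F with frame operator (Q⊗I)^{-1} S (Q*⊗I)^{-1}. Here Q⊗I ∈ End*_{A⊗B}(E⊗F) is the bounded extension of the map x⊗y ↦ Qx⊗y, it has adjoint Q*⊗I and inverse Q^{-1}⊗I, and for every T ∈ E⊗F, ‖Q*^{-1}‖^{-1}·|T| ≤ |(Q*⊗I)T| ≤ ‖Q‖·|T|. -/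
set_option linter.unusedSectionVars false
set_option linter.unusedVariables false
set_option maxHeartbeats 2000000

open scoped NNReal ENNReal

open scoped RightActions

/-- The Hilbert C⋆-module class as it stood in Mathlib of December 2024 (right `A`-action,
inner product `A`-linear on the right: `⟪x, y <• a⟫ = ⟪x, y⟫ * a`); Mathlib's `CStarModule`
now uses a left action. -/
class RightCStarModule (A E : Type*) [NonUnitalSemiring A] [StarRing A] [Module ℂ A]
    [AddCommGroup E] [Module ℂ E] [PartialOrder A] [SMul Aᵐᵒᵖ E] [Norm A] [Norm E]
    extends Inner A E where
  inner_add_right {x} {y} {z} : inner x (y + z) = inner x y + inner x z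
  inner_self_nonneg {x} : 0 ≤ inner x x
  inner_self {x} : inner x x = 0 ↔ x = 0
  inner_op_smul_right {a : A} {x y : E} : inner x (y <• a) = inner x y * a
  inner_smul_right_complex {z : ℂ} {x} {y} : inner x (z • y) = z • inner x y
  star_inner x y : star (inner x y) = inner y x
  norm_eq_sqrt_norm_inner_self x : ‖x‖ = √‖inner x x‖

namespace RightCStarModule

section general

variable {A E : Type*} [CStarAlgebra A] [PartialOrder A] [StarOrderedRing A]
  [NormedAddCommGroup E] [NormedSpace ℂ E] [Module Aᵐᵒᵖ E] [RightCStarModule A E]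

attribute [simp] RightCStarModule.inner_add_right RightCStarModule.star_inner
  RightCStarModule.inner_op_smul_right RightCStarModule.inner_smul_right_complex

@[simp]
lemma inner_add_left {x y z : E} : inner A (x + y) z = inner A x z + inner A y z := by
  rw [← star_star (r := inner A (x + y) z)]
  simp only [RightCStarModule.inner_add_right, star_add, RightCStarModule.star_inner]

@[simp]
lemma inner_op_smul_left {a : A} {x y : E} : inner A (x <• a) y = star a * inner A x y := by
  rw [← RightCStarModule.star_inner]; simp

@[simp]
lemma inner_smul_left_complex {z : ℂ} {x y : E} : inner A (z • x) y = star z • inner A x y := by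
  rw [← RightCStarModule.star_inner]; simp

@[simp]
lemma inner_smul_left_real {z : ℝ} {x y : E} : inner A (z • x) y = z • inner A x y := by
  have h₁ : z • x = (z : ℂ) • x := by simp
  rw [h₁, ← RightCStarModule.star_inner, RightCStarModule.inner_smul_right_complex]
  simp

@[simp]
lemma inner_smul_right_real {z : ℝ} {x y : E} : inner A x (z • y) = z • inner A x y := by
  have h₁ : z • y = (z : ℂ) • y := by simp
  rw [h₁, ← RightCStarModule.star_inner, RightCStarModule.inner_smul_left_complex]
  simp

/-- The function `⟨x, y⟩ ↦ ⟪x, y⟫` bundled as a sesquilinear map. -/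
def innerₛₗ : E →ₗ⋆[ℂ] E →ₗ[ℂ] A where
  toFun x := { toFun := fun y => inner A x y
               map_add' := fun z y => by simp
               map_smul' := fun z y => by simp }
  map_add' z y := by ext; simp
  map_smul' z y := by ext; simp

lemma innerₛₗ_apply {x y : E} : RightCStarModule.innerₛₗ (A := A) x y = inner A x y := rfl

@[simp] lemma inner_zero_right {x : E} : inner A x 0 = 0 := by
  simp [← RightCStarModule.innerₛₗ_apply (A := A)]
@[simp] lemma inner_zero_left {x : E} : inner A 0 x = 0 := by
  simp [← RightCStarModule.innerₛₗ_apply (A := A)]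
@[simp] lemma inner_neg_right {x y : E} : inner A x (-y) = -inner A x y := by
  simp [← RightCStarModule.innerₛₗ_apply (A := A)]
@[simp] lemma inner_neg_left {x y : E} : inner A (-x) y = -inner A x y := by
  simp [← RightCStarModule.innerₛₗ_apply (A := A)]
@[simp] lemma inner_sub_right {x y z : E} : inner A x (y - z) = inner A x y - inner A x z := by
  simp [← RightCStarModule.innerₛₗ_apply (A := A)]
@[simp] lemma inner_sub_left {x y z : E} : inner A (x - y) z = inner A x z - inner A y z := by
  simp [← RightCStarModule.innerₛₗ_apply (A := A)]

@[simp]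
lemma inner_sum_right {ι : Type*} {s : Finset ι} {x : E} {y : ι → E} :
    inner A x (∑ i ∈ s, y i) = ∑ i ∈ s, inner A x (y i) :=
  map_sum (RightCStarModule.innerₛₗ (A := A) x) ..

@[simp]
lemma inner_sum_left {ι : Type*} {s : Finset ι} {x : ι → E} {y : E} :
    inner A (∑ i ∈ s, x i) y = ∑ i ∈ s, inner A (x i) y :=
  map_sum ((RightCStarModule.innerₛₗ (A := A)).flip y) ..

lemma norm_sq_eq {x : E} : ‖x‖ ^ 2 = ‖inner A x x‖ := by
  rw [RightCStarModule.norm_eq_sqrt_norm_inner_self (A := A) x, Real.sq_sqrt (norm_nonneg _)]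

lemma inner_mul_inner_swap_le {x y : E} :
    inner A y x * inner A x y ≤ ‖x‖ ^ 2 • inner A y y := by
  rcases eq_or_ne x 0 with h | h
  · simp [h]
  · have h₁ : ∀ (a : A),
        (0 : A) ≤ ‖x‖ ^ 2 • (star a * a) - ‖x‖ ^ 2 • (star a * inner A x y)
          - ‖x‖ ^ 2 • (inner A y x * a) + ‖x‖ ^ 2 • (‖x‖ ^ 2 • inner A y y) := fun a => by
      calc (0 : A) ≤ inner A (x <• a - ‖x‖ ^ 2 • y) (x <• a - ‖x‖ ^ 2 • y) :=
            RightCStarModule.inner_self_nonneg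
        _ = star a * inner A x x * a - ‖x‖ ^ 2 • (star a * inner A x y)
              - ‖x‖ ^ 2 • (inner A y x * a) + ‖x‖ ^ 2 • (‖x‖ ^ 2 • inner A y y) := by
            simp only [RightCStarModule.inner_sub_right, RightCStarModule.inner_op_smul_right,
              RightCStarModule.inner_sub_left, RightCStarModule.inner_op_smul_left,
              RightCStarModule.inner_smul_left_real, RightCStarModule.inner_smul_right_real,
              mul_sub, sub_mul, mul_smul_comm, smul_mul_assoc, smul_sub, mul_assoc]
            abel
        _ ≤ ‖x‖ ^ 2 • (star a * a) - ‖x‖ ^ 2 • (star a * inner A x y)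
              - ‖x‖ ^ 2 • (inner A y x * a) + ‖x‖ ^ 2 • (‖x‖ ^ 2 • inner A y y) := by
            gcongr
            calc _ ≤ ‖inner A x x‖ • (star a * a) :=
                CStarAlgebra.star_left_conjugate_le_norm_smul (RightCStarModule.star_inner x x)
              _ = (√‖inner A x x‖) ^ 2 • (star a * a) := by
                rw [Real.sq_sqrt]
                positivity
              _ = ‖x‖ ^ 2 • (star a * a) := by
                rw [← RightCStarModule.norm_eq_sqrt_norm_inner_self]
    specialize h₁ (inner A x y)
    simp only [RightCStarModule.star_inner, sub_self, zero_sub, le_neg_add_iff_add_le,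
      add_zero] at h₁
    rwa [smul_le_smul_iff_of_pos_left (pow_pos (norm_pos_iff.mpr h) _)] at h₁

variable (E) in
lemma norm_inner_le {x y : E} : ‖inner A x y‖ ≤ ‖x‖ * ‖y‖ := by
  have := calc ‖inner A x y‖ ^ 2 = ‖inner A y x * inner A x y‖ := by
                rw [← RightCStarModule.star_inner x y, CStarRing.norm_star_mul_self, pow_two]
    _ ≤ ‖‖x‖ ^ 2 • inner A y y‖ := by
                refine CStarAlgebra.norm_le_norm_of_nonneg_of_le ?_
                  RightCStarModule.inner_mul_inner_swap_le
                rw [← RightCStarModule.star_inner x y]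
                exact star_mul_self_nonneg _
    _ = ‖x‖ ^ 2 * ‖inner A y y‖ := by simp [norm_smul]
    _ = ‖x‖ ^ 2 * ‖y‖ ^ 2 := by rw [RightCStarModule.norm_sq_eq (A := A) (x := y)]
    _ = (‖x‖ * ‖y‖) ^ 2 := by rw [mul_pow]
  exact (pow_le_pow_iff_left₀ (norm_nonneg _) (by positivity) (by norm_num)).mp this

/-- The function `⟨x, y⟩ ↦ ⟪x, y⟫` bundled as a continuous sesquilinear map. -/
noncomputable def innerSL : E →L⋆[ℂ] E →L[ℂ] A :=
  LinearMap.mkContinuous₂ (RightCStarModule.innerₛₗ : E →ₗ⋆[ℂ] E →ₗ[ℂ] A) 1 <| fun x y => by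
    simp [RightCStarModule.innerₛₗ_apply, RightCStarModule.norm_inner_le E]

lemma innerSL_apply {x y : E} : RightCStarModule.innerSL (A := A) x y = inner A x y := rfl

lemma continuous_inner : Continuous (fun x : E × E => inner A x.1 x.2) := by
  simp_rw [← RightCStarModule.innerSL_apply]
  fun_prop

end general

end RightCStarModule


section AdjPair

variable (A E : Type*)
    [CStarAlgebra A] [PartialOrder A] [StarOrderedRing A]
    [NormedAddCommGroup E] [NormedSpace ℂ E] [Module Aᵐᵒᵖ E] [RightCStarModule A E]
    [CompleteSpace E]

/-- Pairs of mutually adjoint operators on a Hilbert C*-module. -/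
structure CSMAdj where
  fst : E →L[ℂ] E
  snd : E →L[ℂ] E
  adjoint : ∀ x y : E, (inner A (fst x) y : A) = inner A x (snd y)

namespace CSMAdj

variable {A E}

lemma adjoint' (a : CSMAdj A E) (x y : E) :
    (inner A (a.snd x) y : A) = inner A x (a.fst y) := by
  rw [← RightCStarModule.star_inner (A := A), ← a.adjoint, RightCStarModule.star_inner]

lemma eq_of_inner {u v : E} (h : ∀ x : E, (inner A x u : A) = inner A x v) : u = v := by
  have h2 : (inner A (u - v) (u - v) : A) = 0 := by
    rw [RightCStarModule.inner_sub_right, h (u - v), sub_self]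
  exact sub_eq_zero.mp (RightCStarModule.inner_self.mp h2)

lemma snd_eq_of_fst_eq {a b : CSMAdj A E} (h : a.fst = b.fst) : a.snd = b.snd := by
  ext y
  refine eq_of_inner (A := A) fun x => ?_
  rw [← a.adjoint, h, b.adjoint]

lemma ext' {a b : CSMAdj A E} (h : a.fst = b.fst) : a = b := by
  obtain ⟨f, s, hf⟩ := a
  obtain ⟨g, t, hg⟩ := b
  have h2 := snd_eq_of_fst_eq (a := ⟨f, s, hf⟩) (b := ⟨g, t, hg⟩) h
  simp only at h h2
  subst h; subst h2; rfl

instance : Zero (CSMAdj A E) := ⟨⟨0, 0, by simp⟩⟩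
instance : One (CSMAdj A E) := ⟨⟨1, 1, fun _ _ => rfl⟩⟩

instance : Add (CSMAdj A E) :=
  ⟨fun a b => ⟨a.fst + b.fst, a.snd + b.snd, fun x y => by
    simp [a.adjoint, b.adjoint]⟩⟩

instance : Neg (CSMAdj A E) :=
  ⟨fun a => ⟨-a.fst, -a.snd, fun x y => by simp [a.adjoint]⟩⟩

instance : Sub (CSMAdj A E) :=
  ⟨fun a b => ⟨a.fst - b.fst, a.snd - b.snd, fun x y => by
    simp [a.adjoint, b.adjoint]⟩⟩

instance : Mul (CSMAdj A E) :=
  ⟨fun a b => ⟨a.fst * b.fst, b.snd * a.snd, fun x y => by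
    simp only [ContinuousLinearMap.mul_apply]
    rw [a.adjoint, b.adjoint]⟩⟩

instance : SMul ℂ (CSMAdj A E) :=
  ⟨fun c a => ⟨c • a.fst, star c • a.snd, fun x y => by
    simp [a.adjoint]⟩⟩

noncomputable instance : SMul ℕ (CSMAdj A E) :=
  ⟨fun n a => ⟨n • a.fst, n • a.snd, fun x y => by
    rw [ContinuousLinearMap.smul_apply, ContinuousLinearMap.smul_apply,
      ← Nat.cast_smul_eq_nsmul ℝ n (a.fst x), ← Nat.cast_smul_eq_nsmul ℝ n (a.snd y),
      RightCStarModule.inner_smul_left_real, RightCStarModule.inner_smul_right_real, a.adjoint]⟩⟩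

noncomputable instance : SMul ℤ (CSMAdj A E) :=
  ⟨fun n a => ⟨n • a.fst, n • a.snd, fun x y => by
    rw [ContinuousLinearMap.smul_apply, ContinuousLinearMap.smul_apply,
      ← Int.cast_smul_eq_zsmul ℝ n (a.fst x), ← Int.cast_smul_eq_zsmul ℝ n (a.snd y),
      RightCStarModule.inner_smul_left_real, RightCStarModule.inner_smul_right_real, a.adjoint]⟩⟩

noncomputable instance : NatCast (CSMAdj A E) :=
  ⟨fun n => ⟨n, n, fun x y => by
    rw [ContinuousLinearMap.natCast_apply, ContinuousLinearMap.natCast_apply,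
      ← Nat.cast_smul_eq_nsmul ℝ n x, ← Nat.cast_smul_eq_nsmul ℝ n y,
      RightCStarModule.inner_smul_left_real, RightCStarModule.inner_smul_right_real]⟩⟩

noncomputable instance : IntCast (CSMAdj A E) :=
  ⟨fun n => ⟨n, n, fun x y => by
    rw [ContinuousLinearMap.intCast_apply, ContinuousLinearMap.intCast_apply,
      ← Int.cast_smul_eq_zsmul ℝ n x, ← Int.cast_smul_eq_zsmul ℝ n y,
      RightCStarModule.inner_smul_left_real, RightCStarModule.inner_smul_right_real]⟩⟩

noncomputable instance : Pow (CSMAdj A E) ℕ :=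
  ⟨fun a n => ⟨a.fst ^ n, a.snd ^ n, by
    induction n with
    | zero => exact fun _ _ => rfl
    | succ k hk =>
      intro x y
      rw [pow_succ' a.fst, pow_succ a.snd]
      simp only [ContinuousLinearMap.mul_apply]
      rw [a.adjoint, hk]⟩⟩

/-- Projection onto the first component. -/
def toFst (a : CSMAdj A E) : E →L[ℂ] E := a.fst

lemma toFst_injective : Function.Injective (toFst (A := A) (E := E)) := fun _ _ h => ext' h

noncomputable instance : Ring (CSMAdj A E) :=
  toFst_injective.ring toFst rfl rfl (fun _ _ => rfl) (fun _ _ => rfl)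
    (fun _ => rfl) (fun _ _ => rfl) (fun _ _ => rfl) (fun _ _ => rfl) (fun _ _ => rfl)
    (fun _ => rfl) (fun _ => rfl)

variable (A E) in
/-- Projection onto the first component as a ring homomorphism. -/
def toFstHom : CSMAdj A E →+* (E →L[ℂ] E) where
  toFun a := a.fst
  map_one' := rfl
  map_mul' _ _ := rfl
  map_zero' := rfl
  map_add' _ _ := rfl

noncomputable instance : Module ℂ (CSMAdj A E) :=
  toFst_injective.module ℂ ((toFstHom A E).toAddMonoidHom) (fun _ _ => rfl)

noncomputable instance : Algebra ℂ (CSMAdj A E) :=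
  Algebra.ofModule (fun c a b => ext' (ContinuousLinearMap.smul_comp c a.fst b.fst))
    (fun c a b => ext' (ContinuousLinearMap.comp_smul a.fst c b.fst))

noncomputable instance : NormedRing (CSMAdj A E) :=
  NormedRing.induced _ _ (toFstHom A E) toFst_injective

lemma norm_def (a : CSMAdj A E) : ‖a‖ = ‖a.fst‖ := rfl

noncomputable instance : NormedAlgebra ℂ (CSMAdj A E) where
  norm_smul_le c a := norm_smul_le c a.fst

instance : StarRing (CSMAdj A E) where
  star a := ⟨a.snd, a.fst, a.adjoint'⟩
  star_involutive _ := ext' rfl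
  star_mul _ _ := ext' rfl
  star_add _ _ := ext' rfl

lemma star_fst (a : CSMAdj A E) : (star a).fst = a.snd := rfl
lemma star_snd (a : CSMAdj A E) : (star a).snd = a.fst := rfl

instance : StarModule ℂ (CSMAdj A E) where
  star_smul _ _ := ext' rfl

/-- The first component controls the second in norm. -/
lemma norm_fst_apply_le (a : CSMAdj A E) (k : ℝ) (hk : ∀ x : E, ‖a.snd x‖ ≤ k * ‖x‖)
    (hk0 : 0 ≤ k) (x : E) : ‖a.fst x‖ ≤ k * ‖x‖ := by
  rcases eq_or_lt_of_le (norm_nonneg (a.fst x)) with h0 | h0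
  · calc ‖a.fst x‖ = 0 := h0.symm
      _ ≤ k * ‖x‖ := by positivity
  · have h1 : ‖a.fst x‖ ^ 2 = ‖(inner A (a.fst x) (a.fst x) : A)‖ := RightCStarModule.norm_sq_eq
    rw [a.adjoint] at h1
    have h2 : ‖a.fst x‖ ^ 2 ≤ ‖x‖ * (k * ‖a.fst x‖) := by
      rw [h1]
      calc ‖(inner A x (a.snd (a.fst x)) : A)‖ ≤ ‖x‖ * ‖a.snd (a.fst x)‖ :=
            RightCStarModule.norm_inner_le E
        _ ≤ ‖x‖ * (k * ‖a.fst x‖) := by gcongr; exact hk _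
    have h3 : ‖a.fst x‖ * ‖a.fst x‖ ≤ (k * ‖x‖) * ‖a.fst x‖ := by nlinarith [h2]
    exact le_of_mul_le_mul_right h3 h0

lemma norm_fst_eq_snd (a : CSMAdj A E) : ‖a.fst‖ = ‖a.snd‖ := by
  have h1 : ∀ b : CSMAdj A E, ‖b.fst‖ ≤ ‖b.snd‖ := fun b =>
    ContinuousLinearMap.opNorm_le_bound _ (norm_nonneg _)
      (b.norm_fst_apply_le ‖b.snd‖ (fun x => b.snd.le_opNorm x) (norm_nonneg _))
  exact le_antisymm (h1 a) (h1 (star a))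

instance : CStarRing (CSMAdj A E) where
  norm_mul_self_le a := by
    have key : ∀ x : E, ‖a.fst x‖ ≤ Real.sqrt ‖a.snd * a.fst‖ * ‖x‖ := by
      intro x
      have h1 : ‖a.fst x‖ ^ 2 ≤ ‖a.snd * a.fst‖ * ‖x‖ ^ 2 := by
        calc ‖a.fst x‖ ^ 2 = ‖(inner A (a.fst x) (a.fst x) : A)‖ := RightCStarModule.norm_sq_eq
          _ = ‖(inner A x ((a.snd * a.fst) x) : A)‖ := by rw [a.adjoint]; rfl
          _ ≤ ‖x‖ * ‖(a.snd * a.fst) x‖ := RightCStarModule.norm_inner_le E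
          _ ≤ ‖x‖ * (‖a.snd * a.fst‖ * ‖x‖) := by
              gcongr
              exact ContinuousLinearMap.le_opNorm _ x
          _ = ‖a.snd * a.fst‖ * ‖x‖ ^ 2 := by ring
      calc ‖a.fst x‖ = Real.sqrt (‖a.fst x‖ ^ 2) := (Real.sqrt_sq (norm_nonneg _)).symm
        _ ≤ Real.sqrt (‖a.snd * a.fst‖ * ‖x‖ ^ 2) := Real.sqrt_le_sqrt h1
        _ = Real.sqrt ‖a.snd * a.fst‖ * ‖x‖ := by
            rw [Real.sqrt_mul (norm_nonneg _), Real.sqrt_sq (norm_nonneg _)]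
    have h2 : ‖a.fst‖ ≤ Real.sqrt ‖a.snd * a.fst‖ :=
      ContinuousLinearMap.opNorm_le_bound _ (Real.sqrt_nonneg _) key
    calc ‖a‖ * ‖a‖ = ‖a.fst‖ * ‖a.fst‖ := rfl
      _ ≤ Real.sqrt ‖a.snd * a.fst‖ * Real.sqrt ‖a.snd * a.fst‖ :=
          mul_le_mul h2 h2 (norm_nonneg _) (Real.sqrt_nonneg _)
      _ = ‖a.snd * a.fst‖ := Real.mul_self_sqrt (norm_nonneg _)
      _ = ‖star a * a‖ := rfl

lemma continuous_inner_left (y : E) : Continuous fun w : E => (inner A w y : A) :=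
  RightCStarModule.continuous_inner.comp (continuous_id.prodMk continuous_const)

lemma continuous_inner_right (y : E) : Continuous fun w : E => (inner A y w : A) :=
  RightCStarModule.continuous_inner.comp (continuous_const.prodMk continuous_id)

instance : CompleteSpace (CSMAdj A E) := by
  apply Metric.complete_of_cauchySeq_tendsto
  intro u hu
  have hdist : ∀ n m, dist (u n) (u m) = dist ((u n).fst) ((u m).fst) := fun n m => rfl
  have hdist2 : ∀ n m, dist (u n) (u m) = dist ((u n).snd) ((u m).snd) := by
    intro n m
    rw [dist_eq_norm, dist_eq_norm]
    show ‖(u n - u m).fst‖ = ‖(u n).snd - (u m).snd‖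
    rw [norm_fst_eq_snd]
    rfl
  have hcf : CauchySeq fun n => (u n).fst := by
    rw [Metric.cauchySeq_iff] at hu ⊢
    intro ε hε
    obtain ⟨N, hN⟩ := hu ε hε
    exact ⟨N, fun n hn m hm => by rw [← hdist]; exact hN n hn m hm⟩
  have hcs : CauchySeq fun n => (u n).snd := by
    rw [Metric.cauchySeq_iff] at hu ⊢
    intro ε hε
    obtain ⟨N, hN⟩ := hu ε hε
    exact ⟨N, fun n hn m hm => by rw [← hdist2]; exact hN n hn m hm⟩
  obtain ⟨U, hU⟩ := cauchySeq_tendsto_of_complete hcf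
  obtain ⟨V, hV⟩ := cauchySeq_tendsto_of_complete hcs
  have hrel : ∀ x y : E, (inner A (U x) y : A) = inner A x (V y) := by
    intro x y
    have t1 : Filter.Tendsto (fun n => (inner A ((u n).fst x) y : A)) Filter.atTop
        (nhds (inner A (U x) y : A)) := by
      refine ((continuous_inner_left y).tendsto _).comp ?_
      exact ((ContinuousLinearMap.apply ℂ E x).continuous.tendsto U).comp hU
    have t2 : Filter.Tendsto (fun n => (inner A x ((u n).snd y) : A)) Filter.atTop
        (nhds (inner A x (V y) : A)) := by
      refine ((continuous_inner_right x).tendsto _).comp ?_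
      exact ((ContinuousLinearMap.apply ℂ E y).continuous.tendsto V).comp hV
    have heq : (fun n => (inner A ((u n).fst x) y : A)) =
        fun n => (inner A x ((u n).snd y) : A) := funext fun n => (u n).adjoint x y
    rw [heq] at t1
    exact tendsto_nhds_unique t1 t2
  refine ⟨⟨U, V, hrel⟩, ?_⟩
  rw [Metric.tendsto_atTop] at hU ⊢
  intro ε hε
  obtain ⟨N, hN⟩ := hU ε hε
  exact ⟨N, fun n hn => hN n hn⟩

noncomputable instance : CStarAlgebra (CSMAdj A E) where

end CSMAdj

end AdjPair

section SqrtMono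

variable {C : Type*} [CStarAlgebra C] [PartialOrder C] [StarOrderedRing C]

lemma spectralRadius_mul_comm' (x y : C) :
    spectralRadius ℂ (x * y) = spectralRadius ℂ (y * x) := by
  have key : ∀ a b : C, spectralRadius ℂ (a * b) ≤ spectralRadius ℂ (b * a) := by
    intro a b
    refine iSup₂_le fun k hk => ?_
    rcases eq_or_ne k 0 with rfl | hk0
    · simp
    · have hswap : spectrum ℂ (a * b) \ {0} = spectrum ℂ (b * a) \ {0} := spectrum.nonzero_mul_comm a b
      have hmem : k ∈ spectrum ℂ (a * b) \ {0} := ⟨hk, hk0⟩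
      rw [hswap] at hmem
      exact le_iSup₂ (f := fun k (_ : k ∈ spectrum ℂ (b * a)) => (‖k‖₊ : ℝ≥0∞)) k hmem.1
  exact le_antisymm (key x y) (key y x)

lemma cfc_sqrt_le_sqrt_of_isUnit {a b : C} (ha : 0 ≤ a) (hab : a ≤ b) (hb : IsUnit b) :
    CFC.sqrt a ≤ CFC.sqrt b := by
  cases subsingleton_or_nontrivial C
  · exact le_of_eq (Subsingleton.elim _ _)
  have hb0 : 0 ≤ b := ha.trans hab
  have hsp : (0:ℝ≥0) ∉ spectrum ℝ≥0 b := spectrum.zero_notMem ℝ≥0 hb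
  have h1 : ‖CFC.sqrt a * b ^ (-(1/2) : ℝ)‖ ≤ 1 :=
    (le_iff_norm_sqrt_mul_rpow a b ha (hb.isStrictlyPositive hb0)).mp hab
  set c := CFC.sqrt (CFC.sqrt a) with hc
  set u := b ^ (-(1/4) : ℝ) with hu
  set t := b ^ ((1/4) : ℝ) with ht
  have hc0 : 0 ≤ c := CFC.sqrt_nonneg _
  have hcstar : star c = c := IsSelfAdjoint.of_nonneg hc0
  have hcc : c * c = CFC.sqrt a := CFC.sqrt_mul_sqrt_self _ (CFC.sqrt_nonneg _)
  have hu0 : 0 ≤ u := CFC.rpow_nonneg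
  have hustar : star u = u := IsSelfAdjoint.of_nonneg hu0
  have huu : u * u = b ^ (-(1/2) : ℝ) := by
    rw [hu, ← CFC.rpow_add hb]; norm_num
  have htu : t * u = 1 := by
    rw [ht, hu, ← CFC.rpow_add hb]
    norm_num
    exact CFC.rpow_zero b hb0
  have hut : u * t = 1 := by
    rw [ht, hu, ← CFC.rpow_add hb]
    norm_num
    exact CFC.rpow_zero b hb0
  -- the element `d = c * b^{-1/2} * c` has norm at most 1
  have hd0 : 0 ≤ c * b ^ (-(1/2) : ℝ) * c := by
    have h := star_right_conjugate_nonneg (CFC.rpow_nonneg (a := b) (y := (-(1/2) : ℝ))) c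
    rwa [hcstar] at h
  have hdnorm : ‖c * b ^ (-(1/2) : ℝ) * c‖₊ ≤ 1 := by
    have hr1 : (‖c * b ^ (-(1/2) : ℝ) * c‖₊ : ℝ≥0∞) =
        spectralRadius ℂ (c * b ^ (-(1/2) : ℝ) * c) :=
      (IsSelfAdjoint.of_nonneg hd0).spectralRadius_eq_nnnorm.symm
    have hr2 : spectralRadius ℂ (c * b ^ (-(1/2) : ℝ) * c) =
        spectralRadius ℂ (CFC.sqrt a * b ^ (-(1/2) : ℝ)) := by
      calc spectralRadius ℂ (c * b ^ (-(1/2) : ℝ) * c)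
          = spectralRadius ℂ (c * (b ^ (-(1/2) : ℝ) * c)) := by rw [mul_assoc]
        _ = spectralRadius ℂ ((b ^ (-(1/2) : ℝ) * c) * c) := spectralRadius_mul_comm' _ _
        _ = spectralRadius ℂ (b ^ (-(1/2) : ℝ) * (c * c)) := by rw [mul_assoc]
        _ = spectralRadius ℂ ((c * c) * b ^ (-(1/2) : ℝ)) := spectralRadius_mul_comm' _ _
        _ = spectralRadius ℂ (CFC.sqrt a * b ^ (-(1/2) : ℝ)) := by rw [hcc]
    have hr3 : spectralRadius ℂ (CFC.sqrt a * b ^ (-(1/2) : ℝ)) ≤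
        (‖CFC.sqrt a * b ^ (-(1/2) : ℝ)‖₊ : ℝ≥0∞) := spectrum.spectralRadius_le_nnnorm _
    have hle : (‖c * b ^ (-(1/2) : ℝ) * c‖₊ : ℝ≥0∞) ≤ 1 := by
      rw [hr1]
      refine hr2.le.trans (hr3.trans ?_)
      rw [show ((1:ℝ≥0∞)) = ((1:ℝ≥0) : ℝ≥0∞) by simp]
      exact_mod_cast ENNReal.coe_le_coe.mpr (by exact_mod_cast h1)
    exact_mod_cast hle
  -- hence `u * sqrt a * u ≤ 1`
  have hx1 : ‖c * u‖₊ ^ 2 ≤ 1 := by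
    have : ‖(c * u) * star (c * u)‖₊ = ‖c * u‖₊ ^ 2 := by
      rw [CStarRing.nnnorm_self_mul_star, sq]
    rw [← this]
    have hform : (c * u) * star (c * u) = c * b ^ (-(1/2) : ℝ) * c := by
      rw [star_mul, hustar, hcstar]
      calc c * u * (u * c) = c * (u * u) * c := by simp only [mul_assoc]
        _ = c * b ^ (-(1/2) : ℝ) * c := by rw [huu]
    rw [hform]
    exact hdnorm
  have hxle : ‖c * u‖₊ ≤ 1 := by
    have := pow_le_one_iff_of_nonneg (zero_le : (0:ℝ≥0) ≤ ‖c * u‖₊) (two_ne_zero)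
    exact this.mp hx1
  have hA2 : u * CFC.sqrt a * u ≤ 1 := by
    have hform : star (c * u) * (c * u) = u * CFC.sqrt a * u := by
      rw [star_mul, hustar, hcstar, ← hcc]
      simp only [mul_assoc]
    have hnn : ‖star (c * u) * (c * u)‖ ≤ 1 := by
      rw [CStarRing.norm_star_mul_self]
      calc ‖c * u‖ * ‖c * u‖ ≤ 1 * 1 := by
            have : ‖c * u‖ ≤ 1 := hxle
            exact mul_le_mul this this (norm_nonneg _) zero_le_one
        _ = 1 := one_mul 1
    have := (CStarAlgebra.norm_le_one_iff_of_nonneg _ (star_mul_self_nonneg (c * u))).mp hnn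
    rwa [hform] at this
  -- conjugate by t
  have ht_sa : IsSelfAdjoint t := IsSelfAdjoint.of_nonneg CFC.rpow_nonneg
  have h3 := ht_sa.conjugate_le_conjugate hA2
  have hLHS : t * (u * CFC.sqrt a * u) * t = CFC.sqrt a := by
    calc t * (u * CFC.sqrt a * u) * t = (t * u) * CFC.sqrt a * (u * t) := by
          simp only [mul_assoc]
      _ = CFC.sqrt a := by rw [htu, hut, one_mul, mul_one]
  have hRHS : t * 1 * t = CFC.sqrt b := by
    rw [mul_one, ht, ← CFC.rpow_add hb]
    norm_num
    exact (CFC.sqrt_eq_rpow (a := b)).symm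
  rwa [hLHS, hRHS] at h3

lemma cfc_sqrt_mono {a b : C} (ha : 0 ≤ a) (hab : a ≤ b) : CFC.sqrt a ≤ CFC.sqrt b := by
  have hb0 : 0 ≤ b := ha.trans hab
  have hone : (0:C) ≤ 1 := by simpa using star_mul_self_nonneg (1 : C)
  have halg : ∀ ε : ℝ≥0, (0:C) ≤ algebraMap ℝ≥0 C ε := by
    intro ε
    rw [Algebra.algebraMap_eq_smul_one]
    exact smul_nonneg ε.2 hone
  have key : ∀ ε : ℝ≥0, 0 < ε →
      CFC.sqrt a ≤ CFC.sqrt b + algebraMap ℝ≥0 C (NNReal.sqrt ε) := by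
    intro ε hε
    have hbe0 : 0 ≤ b + algebraMap ℝ≥0 C ε := add_nonneg hb0 (halg ε)
    have hunit : IsUnit (b + algebraMap ℝ≥0 C ε) := by
      refine (fun (hu : IsUnit (algebraMap ℝ≥0 C ε)) hle => CStarAlgebra.isUnit_of_le _ hle (hu.isStrictlyPositive (halg ε))) ?_ ?_
      · have : IsUnit ((ε : ℝ≥0) : ℝ) := isUnit_iff_ne_zero.mpr (by exact_mod_cast hε.ne')
        have h5 := this.map (algebraMap ℝ C)
        rw [IsScalarTower.algebraMap_apply ℝ≥0 ℝ C ε]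
        simpa using h5
      · exact le_add_of_nonneg_left hb0
    have h1 : CFC.sqrt a ≤ CFC.sqrt (b + algebraMap ℝ≥0 C ε) :=
      cfc_sqrt_le_sqrt_of_isUnit ha (hab.trans (le_add_of_nonneg_right (halg ε))) hunit
    have h2 : CFC.sqrt (b + algebraMap ℝ≥0 C ε) ≤
        CFC.sqrt b + algebraMap ℝ≥0 C (NNReal.sqrt ε) := by
      have hb' : b + algebraMap ℝ≥0 C ε = cfc (fun s : ℝ≥0 => s + ε) b := by
        rw [cfc_add b _ _, cfc_id' ℝ≥0 b, cfc_const ε b]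
      rw [hb', CFC.sqrt_eq_cfc, ← cfc_comp' NNReal.sqrt (fun s : ℝ≥0 => s + ε) b]
      calc cfc (fun s : ℝ≥0 => NNReal.sqrt (s + ε)) b
          ≤ cfc (fun s : ℝ≥0 => NNReal.sqrt s + NNReal.sqrt ε) b := by
            refine cfc_mono fun s _ => ?_
            have h4 : s + ε ≤ (NNReal.sqrt s + NNReal.sqrt ε) ^ 2 := by
              rw [add_sq, NNReal.sq_sqrt, NNReal.sq_sqrt, add_assoc]
              exact add_le_add_right le_add_self s
            calc NNReal.sqrt (s + ε) ≤
                NNReal.sqrt ((NNReal.sqrt s + NNReal.sqrt ε) ^ 2) := NNReal.sqrt_le_sqrt.mpr h4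
              _ = NNReal.sqrt s + NNReal.sqrt ε := NNReal.sqrt_sq _
        _ = CFC.sqrt b + algebraMap ℝ≥0 C (NNReal.sqrt ε) := by
            rw [cfc_add b _ _, cfc_const (NNReal.sqrt ε) b, CFC.sqrt_eq_cfc]
    exact h1.trans h2
  -- pass to the limit
  have hseq : Filter.Tendsto
      (fun n : ℕ => CFC.sqrt b + algebraMap ℝ≥0 C (NNReal.sqrt ((n+1 : ℝ≥0))⁻¹))
      Filter.atTop (nhds (CFC.sqrt b)) := by
    have h0 : Filter.Tendsto (fun n : ℕ => ((NNReal.sqrt ((n+1 : ℝ≥0))⁻¹ : ℝ≥0) : ℝ))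
        Filter.atTop (nhds 0) := by
      have h1 : Filter.Tendsto (fun n : ℕ => ((n+1 : ℝ≥0))⁻¹) Filter.atTop (nhds 0) := by
        rw [← NNReal.tendsto_coe]
        exact tendsto_one_div_add_atTop_nhds_zero_nat.congr (fun n => by simp [one_div])
      have h2 : Filter.Tendsto (fun n : ℕ => NNReal.sqrt ((n+1 : ℝ≥0))⁻¹)
          Filter.atTop (nhds 0) := by
        have := (NNReal.continuous_sqrt.tendsto 0).comp h1
        simpa [Function.comp_def] using this
      rw [← NNReal.tendsto_coe] at h2
      exact h2
    have h3 : Filter.Tendsto (fun n : ℕ => algebraMap ℝ≥0 C (NNReal.sqrt ((n+1 : ℝ≥0))⁻¹))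
        Filter.atTop (nhds 0) := by
      have hfeq : (fun n : ℕ => algebraMap ℝ≥0 C (NNReal.sqrt ((n+1 : ℝ≥0))⁻¹)) =
          fun n : ℕ => algebraMap ℝ C ((NNReal.sqrt ((n+1 : ℝ≥0))⁻¹ : ℝ≥0) : ℝ) := by
        funext n
        rw [IsScalarTower.algebraMap_apply ℝ≥0 ℝ C]
        norm_num
      rw [hfeq]
      have hcont := (continuous_algebraMap ℝ C).tendsto (0 : ℝ)
      simpa [Function.comp_def] using hcont.comp h0
    simpa using tendsto_const_nhds.add h3
  refine ge_of_tendsto hseq (Filter.Eventually.of_forall fun n => key _ ?_)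
  positivity

lemma cfc_sqrt_real_smul_sq (r : ℝ) (hr : 0 ≤ r) {x : C} (hx : 0 ≤ x) :
    CFC.sqrt ((r ^ 2) • x) = r • CFC.sqrt x := by
  have hb : (0:C) ≤ r • CFC.sqrt x := smul_nonneg hr (CFC.sqrt_nonneg _)
  refine CFC.sqrt_unique ?_ hb
  rw [smul_mul_smul_comm, CFC.sqrt_mul_sqrt_self x hx, ← sq]

end SqrtMono

section DenseSpan

variable {T : Type*} [NormedAddCommGroup T] [NormedSpace ℂ T]
  {V : Type*} [TopologicalSpace V] [T2Space V]

lemma eq_on_dense_span {s : Set T} (hd : Dense (Submodule.span ℂ s : Set T))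
    {f g : T → V} (hf : Continuous f) (hg : Continuous g)
    (hgen : ∀ x ∈ s, f x = g x) (h0 : f 0 = g 0)
    (hadd : ∀ x y, f x = g x → f y = g y → f (x + y) = g (x + y))
    (hsmul : ∀ (c : ℂ) x, f x = g x → f (c • x) = g (c • x)) : ∀ z, f z = g z := by
  have hspan : ∀ z ∈ Submodule.span ℂ s, f z = g z := fun z hz =>
    Submodule.span_induction (p := fun z _ => f z = g z) hgen h0 (fun x y _ _ => hadd x y)
      (fun c x _ => hsmul c x) hz
  have hclosed : IsClosed {z : T | f z = g z} := isClosed_eq hf hg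
  intro z
  have hsub : (Submodule.span ℂ s : Set T) ⊆ {z | f z = g z} := fun z hz => hspan z hz
  have h2 := closure_minimal hsub hclosed
  exact h2 (hd.closure_eq ▸ Set.mem_univ z)

end DenseSpan

section NormLemma

variable {A B C : Type*}
    [CStarAlgebra A] [PartialOrder A] [StarOrderedRing A]
    [CStarAlgebra B] [PartialOrder B] [StarOrderedRing B]
    [CStarAlgebra C] [PartialOrder C] [StarOrderedRing C]
    {E F T : Type*}
    [NormedAddCommGroup E] [NormedSpace ℂ E] [Module Aᵐᵒᵖ E] [RightCStarModule A E] [CompleteSpace E]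
    [NormedAddCommGroup F] [NormedSpace ℂ F] [Module Bᵐᵒᵖ F] [RightCStarModule B F] [CompleteSpace F]
    [NormedAddCommGroup T] [NormedSpace ℂ T] [Module Cᵐᵒᵖ T] [RightCStarModule C T] [CompleteSpace T]

/-- The key inequality: if `U = u ⊗ I` on the exterior tensor product and `u` has an
adjoint and is bounded by `k`, then `⟨Uz, Uz⟩ ≤ k² • ⟨z, z⟩`. -/
lemma tensor_op_inner_le
    (m : A →ₗ[ℂ] B →ₗ[ℂ] C)
    (tm : E →ₗ[ℂ] F →ₗ[ℂ] T)
    (htm_inner : ∀ (x x' : E) (y y' : F),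
      (inner C (tm x y) (tm x' y') : C) = m (inner A x x' : A) (inner B y y' : B))
    (htm_dense : Dense (Submodule.span ℂ {z : T | ∃ x y, tm x y = z} : Set T))
    (U : T →L[ℂ] T) (u u' : E →L[ℂ] E)
    (hU : ∀ (x : E) (y : F), U (tm x y) = tm (u x) y)
    (hadj : ∀ x x' : E, (inner A (u x) x' : A) = inner A x (u' x'))
    (k : ℝ) (hk0 : 0 ≤ k) (hk : ∀ x : E, ‖u x‖ ≤ k * ‖x‖)
    (z : T) : (inner C (U z) (U z) : C) ≤ (k ^ 2 : ℝ) • (inner C z z : C) := by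
  letI : PartialOrder (CSMAdj A E) := CStarAlgebra.spectralOrder _
  haveI : StarOrderedRing (CSMAdj A E) := CStarAlgebra.spectralOrderedRing _
  set q : CSMAdj A E := ⟨u, u', hadj⟩ with hq
  have hq_norm : ‖q‖ ≤ k := ContinuousLinearMap.opNorm_le_bound _ hk0 hk
  have hsqq : star q * q ≤ algebraMap ℝ (CSMAdj A E) (k ^ 2) := by
    refine (CStarAlgebra.star_mul_le_algebraMap_norm_sq (a := q)).trans ?_
    have hdiff : (0 : CSMAdj A E) ≤ algebraMap ℝ (CSMAdj A E) (k ^ 2 - ‖q‖ ^ 2) := by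
      rw [Algebra.algebraMap_eq_smul_one]
      refine smul_nonneg ?_ (by simpa using star_mul_self_nonneg (1 : CSMAdj A E))
      have : ‖q‖ ^ 2 ≤ k ^ 2 := by
        have := pow_le_pow_left₀ (norm_nonneg q) hq_norm 2
        simpa using this
      linarith
    have := add_le_add_right hdiff (algebraMap ℝ (CSMAdj A E) (‖q‖ ^ 2))
    simpa [← map_add] using this
  set aD : CSMAdj A E := algebraMap ℝ (CSMAdj A E) (k ^ 2) - star q * q with haD
  have ha : 0 ≤ aD := sub_nonneg.mpr hsqq
  set v : CSMAdj A E := CFC.sqrt aD with hv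
  have hv0 : (0 : CSMAdj A E) ≤ v := CFC.sqrt_nonneg _
  have hvsa : star v = v := IsSelfAdjoint.of_nonneg hv0
  have hvv : v * v = aD := CFC.sqrt_mul_sqrt_self aD ha
  have hvfst : v.snd = v.fst := by
    have h := congrArg CSMAdj.snd hvsa
    exact h.symm
  -- the E-level identity
  have hkey : ∀ x x' : E, (inner A (v.fst x) (v.fst x') : A)
      = (k ^ 2 : ℝ) • (inner A x x' : A) - inner A (u x) (u x') := by
    intro x x'
    have h1 : (inner A (v.fst x) (v.fst x') : A) = inner A x (v.snd (v.fst x')) :=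
      v.adjoint x _
    have h2 : v.snd (v.fst x') = aD.fst x' := by
      rw [hvfst]
      show (v * v).fst x' = aD.fst x'
      rw [hvv]
    have h4 : aD.fst x' = (k ^ 2 : ℝ) • x' - u' (u x') := by
      have hfst : aD.fst = (algebraMap ℝ (CSMAdj A E) (k ^ 2)).fst - (star q * q).fst := rfl
      rw [hfst]
      have halg : (algebraMap ℝ (CSMAdj A E) (k ^ 2)).fst x' = (k ^ 2 : ℝ) • x' := by
        rw [IsScalarTower.algebraMap_apply ℝ ℂ (CSMAdj A E),
          Algebra.algebraMap_eq_smul_one]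
        show (algebraMap ℝ ℂ (k ^ 2)) • x' = (k ^ 2 : ℝ) • x'
        rw [algebraMap_smul]
      show (algebraMap ℝ (CSMAdj A E) (k ^ 2)).fst x' - (star q * q).fst x' = _
      rw [halg]
      rfl
    rw [h1, h2, h4, RightCStarModule.inner_sub_right, RightCStarModule.inner_smul_right_real, ← hadj]
  -- closedness of the inequality set
  have hc1 : Continuous fun z : T => (inner C z z : C) :=
    RightCStarModule.continuous_inner.comp (continuous_id.prodMk continuous_id)
  have hc2 : Continuous fun z : T => (inner C (U z) (U z) : C) :=
    RightCStarModule.continuous_inner.comp (U.continuous.prodMk U.continuous)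
  have hclosed : IsClosed {z : T | (inner C (U z) (U z) : C) ≤ (k ^ 2 : ℝ) • inner C z z} := by
    have heq : {z : T | (inner C (U z) (U z) : C) ≤ (k ^ 2 : ℝ) • inner C z z} =
        (fun z : T => (k ^ 2 : ℝ) • (inner C z z : C) - inner C (U z) (U z)) ⁻¹'
          {c : C | 0 ≤ c} := by
      ext w
      simp [sub_nonneg]
    rw [heq]
    exact CStarAlgebra.isClosed_nonneg.preimage ((hc1.const_smul _).sub hc2)
  -- the inequality on the span
  have hspan : ∀ w ∈ (Submodule.span ℂ {z : T | ∃ x y, tm x y = z} : Set T),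
      (inner C (U w) (U w) : C) ≤ (k ^ 2 : ℝ) • inner C w w := by
    intro w hw
    rw [SetLike.mem_coe, Submodule.mem_span_set'] at hw
    obtain ⟨n, f, g, hsum⟩ := hw
    choose X Y hXY using fun i : Fin n => (g i).2
    set xs : Fin n → E := fun i => f i • X i with hxs
    have hw_eq : w = ∑ i, tm (xs i) (Y i) := by
      rw [← hsum]
      refine Finset.sum_congr rfl fun i _ => ?_
      rw [← hXY i]
      simp only [hxs, map_smul, LinearMap.smul_apply]
    have hgram : ∀ w1 w2 : Fin n → E,
        (inner C (∑ i, tm (w1 i) (Y i)) (∑ j, tm (w2 j) (Y j)) : C)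
          = ∑ i, ∑ j, m (inner A (w1 i) (w2 j) : A) (inner B (Y i) (Y j) : B) := by
      intro w1 w2
      rw [RightCStarModule.inner_sum_left]
      refine Finset.sum_congr rfl fun i _ => ?_
      rw [RightCStarModule.inner_sum_right]
      exact Finset.sum_congr rfl fun j _ => htm_inner _ _ _ _
    have hUw : U w = ∑ i, tm (u (xs i)) (Y i) := by
      rw [hw_eq, map_sum]
      exact Finset.sum_congr rfl fun i _ => hU _ _
    have hsos : (0 : C) ≤ (k ^ 2 : ℝ) • (inner C w w : C) - inner C (U w) (U w) := by
      have hpos : (0:C) ≤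
          inner C (∑ i, tm (v.fst (xs i)) (Y i)) (∑ j, tm (v.fst (xs j)) (Y j)) :=
        RightCStarModule.inner_self_nonneg
      have hcomp :
          (inner C (∑ i, tm (v.fst (xs i)) (Y i)) (∑ j, tm (v.fst (xs j)) (Y j)) : C)
          = (k ^ 2 : ℝ) • (inner C w w : C) - inner C (U w) (U w) := by
        rw [hgram, hUw, hw_eq, hgram, hgram]
        rw [Finset.smul_sum, ← Finset.sum_sub_distrib]
        refine Finset.sum_congr rfl fun i _ => ?_
        rw [Finset.smul_sum, ← Finset.sum_sub_distrib]
        refine Finset.sum_congr rfl fun j _ => ?_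
        rw [hkey]
        rw [map_sub, LinearMap.sub_apply, LinearMap.map_smul_of_tower, LinearMap.smul_apply]
      rw [← hcomp]
      exact hpos
    exact sub_nonneg.mp hsos
  have hsub : (Submodule.span ℂ {z : T | ∃ x y, tm x y = z} : Set T) ⊆
      {z : T | (inner C (U z) (U z) : C) ≤ (k ^ 2 : ℝ) • inner C z z} := fun w hw => hspan w hw
  have h2 := closure_minimal hsub hclosed
  exact h2 (htm_dense.closure_eq ▸ Set.mem_univ z)

end NormLemma

/-- Let `E` be a Hilbert `A`-module, `F` a Hilbert `B`-module, `T = E ⊗ F`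
their exterior tensor product over the spatial tensor product `C = A ⊗ B`.  Let
`Q ∈ End*_A(E)` be invertible and let `{Ts i}` be a standard frame in `E ⊗ F` with frame
operator `S`.  Then `{(Q* ⊗ I)(Ts i)}` is a frame of `E ⊗ F` with frame operator
`(Q ⊗ I)⁻¹ S (Q* ⊗ I)⁻¹`.  Here `Q ⊗ I` is the bounded extension of `x ⊗ y ↦ Qx ⊗ y`;
it is adjointable with adjoint `Q* ⊗ I` and inverse `Q⁻¹ ⊗ I`, and for every `z ∈ E ⊗ F`
one has `‖Q*⁻¹‖⁻¹·|z| ≤ |(Q* ⊗ I) z| ≤ ‖Q‖·|z|`, where `|z| = ⟨z,z⟩^{1/2} ∈ A ⊗ B`. -/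
theorem cstar_module_tensor_invertible_operator_frame
    {A B C : Type*}
    [CStarAlgebra A] [PartialOrder A] [StarOrderedRing A]
    [CStarAlgebra B] [PartialOrder B] [StarOrderedRing B]
    [CStarAlgebra C] [PartialOrder C] [StarOrderedRing C]
    -- the spatial tensor product `C = A ⊗ B`
    (m : A →ₗ[ℂ] B →ₗ[ℂ] C)
    (hm_mul : ∀ (a a' : A) (b b' : B), m (a * a') (b * b') = m a b * m a' b')
    (hm_star : ∀ (a : A) (b : B), star (m a b) = m (star a) (star b))
    (hm_one : m 1 1 = 1)
    (hm_norm : ∀ (a : A) (b : B), ‖m a b‖ = ‖a‖ * ‖b‖)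
    (hm_dense : Dense (Submodule.span ℂ {c : C | ∃ a b, m a b = c} : Set C))
    -- the Hilbert modules `E`, `F` and `T = E ⊗ F`
    {E F T : Type*}
    [NormedAddCommGroup E] [NormedSpace ℂ E] [Module Aᵐᵒᵖ E] [RightCStarModule A E]
      [CompleteSpace E]
    [NormedAddCommGroup F] [NormedSpace ℂ F] [Module Bᵐᵒᵖ F] [RightCStarModule B F]
      [CompleteSpace F]
    [NormedAddCommGroup T] [NormedSpace ℂ T] [Module Cᵐᵒᵖ T] [RightCStarModule C T]
      [CompleteSpace T]
    (tm : E →ₗ[ℂ] F →ₗ[ℂ] T)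
    (htm_inner : ∀ (x x' : E) (y y' : F),
      (inner C (tm x y) (tm x' y') : C) = m (inner A x x' : A) (inner B y y' : B))
    (htm_dense : Dense (Submodule.span ℂ {z : T | ∃ x y, tm x y = z} : Set T))
    (htm_smul : ∀ (a : A) (b : B) (x : E) (y : F),
      tm x y <• m a b = tm (x <• a) (y <• b))
    -- the invertible adjointable operator `Q ∈ End*_A(E)`, with adjoint `Qadj`,
    -- inverse `Qinv` and `Qadjinv = (Q*)⁻¹`
    (Q Qinv Qadj Qadjinv : E →L[ℂ] E)
    (hQ_mod : ∀ (a : A) (x : E), Q (x <• a) = Q x <• a)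
    (hQ_adj : ∀ x x' : E, (inner A (Q x) x' : A) = inner A x (Qadj x'))
    (hQ_inv : ∀ x, Qinv (Q x) = x) (hQ_inv' : ∀ x, Q (Qinv x) = x)
    (hQadj_inv : ∀ x, Qadjinv (Qadj x) = x) (hQadj_inv' : ∀ x, Qadj (Qadjinv x) = x)
    -- the operators `Q ⊗ I`, `Q* ⊗ I`, `Q⁻¹ ⊗ I`, `(Q*)⁻¹ ⊗ I` on `T`
    (QI QadjI QinvI QadjinvI : T →L[ℂ] T)
    (hQI : ∀ (x : E) (y : F), QI (tm x y) = tm (Q x) y)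
    (hQadjI : ∀ (x : E) (y : F), QadjI (tm x y) = tm (Qadj x) y)
    (hQinvI : ∀ (x : E) (y : F), QinvI (tm x y) = tm (Qinv x) y)
    (hQadjinvI : ∀ (x : E) (y : F), QadjinvI (tm x y) = tm (Qadjinv x) y)
    -- the standard frame `{Ts i}` of `E ⊗ F`, with frame operator `S`
    {I' : Type*} [Countable I']
    (Ts : I' → T) (A₀ B₀ : ℝ) (hA₀ : 0 < A₀) (hAB₀ : A₀ ≤ B₀)
    (hTs_sum : ∀ z : T, Summable fun i => (inner C z (Ts i) : C) * (inner C (Ts i) z : C))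
    (hTs_lower : ∀ z : T,
      A₀ • (inner C z z : C) ≤ ∑' i, (inner C z (Ts i) : C) * (inner C (Ts i) z : C))
    (hTs_upper : ∀ z : T,
      ∑' i, (inner C z (Ts i) : C) * (inner C (Ts i) z : C) ≤ B₀ • (inner C z z : C))
    (S : T →L[ℂ] T) (Sinv : T →L[ℂ] T)
    (hS_mod : ∀ (c : C) (z : T), S (z <• c) = S z <• c)
    (hS_inv : ∀ z, Sinv (S z) = z) (hS_inv' : ∀ z, S (Sinv z) = z)
    (hS : ∀ z : T, HasSum (fun i => Ts i <• (inner C (S (Ts i)) z : C)) z) :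
    -- conclusion (1): `Q ⊗ I ∈ End*_{A⊗B}(E ⊗ F)`: it has adjoint `Q* ⊗ I` and
    -- inverse `Q⁻¹ ⊗ I` (and likewise `(Q* ⊗ I)⁻¹ = (Q*)⁻¹ ⊗ I`)
    ((∀ z z' : T, (inner C (QI z) z' : C) = inner C z (QadjI z')) ∧
      (∀ z, QinvI (QI z) = z) ∧ (∀ z, QI (QinvI z) = z) ∧
      (∀ z, QadjinvI (QadjI z) = z) ∧ (∀ z, QadjI (QadjinvI z) = z)) ∧
    -- conclusion (2): `‖Q*⁻¹‖⁻¹·|z| ≤ |(Q* ⊗ I) z| ≤ ‖Q‖·|z|` for all `z ∈ E ⊗ F`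
    (∀ z : T,
      ‖Qadjinv‖⁻¹ • CFC.sqrt (inner C z z : C)
          ≤ CFC.sqrt (inner C (QadjI z) (QadjI z) : C) ∧
      CFC.sqrt (inner C (QadjI z) (QadjI z) : C) ≤ ‖Q‖ • CFC.sqrt (inner C z z : C)) ∧
    -- conclusion (3): `{(Q* ⊗ I)(Ts i)}` is a frame of `E ⊗ F` …
    (∃ A₁ B₁ : ℝ, 0 < A₁ ∧ A₁ ≤ B₁ ∧ ∀ z : T,
      Summable (fun i =>
        (inner C z (QadjI (Ts i)) : C) * (inner C (QadjI (Ts i)) z : C)) ∧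
      A₁ • (inner C z z : C)
        ≤ ∑' i, (inner C z (QadjI (Ts i)) : C) * (inner C (QadjI (Ts i)) z : C) ∧
      ∑' i, (inner C z (QadjI (Ts i)) : C) * (inner C (QadjI (Ts i)) z : C)
        ≤ B₁ • (inner C z z : C)) ∧
    -- conclusion (4): … with frame operator `(Q ⊗ I)⁻¹ S (Q* ⊗ I)⁻¹`
    (∀ z : T, HasSum
      (fun i => QadjI (Ts i)
        <• (inner C (QinvI (S (QadjinvI (QadjI (Ts i))))) z : C)) z) := by
  classical
  -- E-level adjoint pairs
  have hQadj_adj : ∀ x x' : E, (inner A (Qadj x) x' : A) = inner A x (Q x') := by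
    intro x x'
    rw [← RightCStarModule.star_inner (A := A), ← hQ_adj, RightCStarModule.star_inner]
  have hQadjinv_adj : ∀ x x' : E, (inner A (Qadjinv x) x' : A) = inner A x (Qinv x') := by
    intro x x'
    calc (inner A (Qadjinv x) x' : A) = inner A (Qadjinv x) (Q (Qinv x')) := by rw [hQ_inv']
      _ = inner A (Qadj (Qadjinv x)) (Qinv x') := (hQadj_adj _ _).symm
      _ = inner A x (Qinv x') := by rw [hQadj_inv']
  have hQinv_adj : ∀ x x' : E, (inner A (Qinv x) x' : A) = inner A x (Qadjinv x') := by
    intro x x'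
    rw [← RightCStarModule.star_inner (A := A), ← hQadjinv_adj, RightCStarModule.star_inner]
  -- generic T-level adjoint relation from an E-level one, by density
  have mk_adjT : ∀ (U U' : T →L[ℂ] T) (u u' : E →L[ℂ] E),
      (∀ (x : E) (y : F), U (tm x y) = tm (u x) y) →
      (∀ (x : E) (y : F), U' (tm x y) = tm (u' x) y) →
      (∀ x x' : E, (inner A (u x) x' : A) = inner A x (u' x')) →
      ∀ z w : T, (inner C (U z) w : C) = inner C z (U' w) := by
    intro U U' u u' hU hU' huu'
    have step1 : ∀ t ∈ {z : T | ∃ x y, tm x y = z}, ∀ w : T,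
        (inner C (U t) w : C) = inner C t (U' w) := by
      rintro t ⟨x, y, rfl⟩
      refine eq_on_dense_span htm_dense (f := fun w => (inner C (U (tm x y)) w : C))
        (g := fun w => (inner C (tm x y) (U' w) : C))
        (CSMAdj.continuous_inner_right _)
        ((CSMAdj.continuous_inner_right _).comp U'.continuous) ?_ (by simp) ?_ ?_
      · rintro t' ⟨x', y', rfl⟩
        rw [hU, hU', htm_inner, htm_inner, huu']
      · intro a b ha hb
        simp only [map_add, RightCStarModule.inner_add_right, ha, hb]
      · intro c a h
        simp only [map_smul, RightCStarModule.inner_smul_right_complex, h]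
    intro z w
    refine eq_on_dense_span htm_dense (f := fun z => (inner C (U z) w : C))
      (g := fun z => (inner C z (U' w) : C))
      ((CSMAdj.continuous_inner_left _).comp U.continuous)
      (CSMAdj.continuous_inner_left _) ?_ (by simp) ?_ ?_ z
    · intro t ht
      exact step1 t ht w
    · intro a b ha hb
      simp only [map_add, RightCStarModule.inner_add_left, ha, hb]
    · intro c a h
      simp only [map_smul, RightCStarModule.inner_smul_left_complex, h]
  have hadjT : ∀ z w : T, (inner C (QI z) w : C) = inner C z (QadjI w) :=
    mk_adjT QI QadjI Q Qadj hQI hQadjI hQ_adj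
  have hadjT_inv : ∀ z w : T, (inner C (QinvI z) w : C) = inner C z (QadjinvI w) :=
    mk_adjT QinvI QadjinvI Qinv Qadjinv hQinvI hQadjinvI hQinv_adj
  -- generic T-level inverse identities
  have mk_idT : ∀ (V W : T →L[ℂ] T) (v w : E →L[ℂ] E),
      (∀ (x : E) (y : F), V (tm x y) = tm (v x) y) →
      (∀ (x : E) (y : F), W (tm x y) = tm (w x) y) →
      (∀ x, w (v x) = x) → ∀ z, W (V z) = z := by
    intro V W v w hV hW hwv
    refine eq_on_dense_span htm_dense (f := fun z => W (V z)) (g := fun z => z)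
      (W.continuous.comp V.continuous) continuous_id ?_ (by simp) ?_ ?_
    · rintro t ⟨x, y, rfl⟩
      rw [hV, hW, hwv]
    · intro a b ha hb
      simp only [map_add, ha, hb]
    · intro c a h
      simp only [map_smul, h]
  have hid1 : ∀ z, QinvI (QI z) = z := mk_idT QI QinvI Q Qinv hQI hQinvI hQ_inv
  have hid2 : ∀ z, QI (QinvI z) = z := mk_idT QinvI QI Qinv Q hQinvI hQI hQ_inv'
  have hid3 : ∀ z, QadjinvI (QadjI z) = z :=
    mk_idT QadjI QadjinvI Qadj Qadjinv hQadjI hQadjinvI hQadj_inv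
  have hid4 : ∀ z, QadjI (QadjinvI z) = z :=
    mk_idT QadjinvI QadjI Qadjinv Qadj hQadjinvI hQadjI hQadj_inv'
  -- norm inequalities
  have hQadj_bound : ∀ x : E, ‖Qadj x‖ ≤ ‖Q‖ * ‖x‖ :=
    CSMAdj.norm_fst_apply_le ⟨Qadj, Q, hQadj_adj⟩ ‖Q‖ (fun x => Q.le_opNorm x) (norm_nonneg Q)
  have hN_QadjI : ∀ z : T,
      (inner C (QadjI z) (QadjI z) : C) ≤ (‖Q‖ ^ 2 : ℝ) • (inner C z z : C) :=
    tensor_op_inner_le m tm htm_inner htm_dense QadjI Qadj Q hQadjI hQadj_adj ‖Q‖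
      (norm_nonneg Q) hQadj_bound
  have hN_QadjinvI : ∀ z : T,
      (inner C (QadjinvI z) (QadjinvI z) : C) ≤ (‖Qadjinv‖ ^ 2 : ℝ) • (inner C z z : C) :=
    tensor_op_inner_le m tm htm_inner htm_dense QadjinvI Qadjinv Qinv hQadjinvI hQadjinv_adj
      ‖Qadjinv‖ (norm_nonneg _) (fun x => Qadjinv.le_opNorm x)
  set kQ : ℝ := max ‖Q‖ 1 with hkQdef
  set kI : ℝ := max ‖Qinv‖ 1 with hkIdef
  have hkQ1 : (1:ℝ) ≤ kQ := le_max_right _ _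
  have hkI1 : (1:ℝ) ≤ kI := le_max_right _ _
  have hkQ0 : (0:ℝ) ≤ kQ := zero_le_one.trans hkQ1
  have hkI0 : (0:ℝ) ≤ kI := zero_le_one.trans hkI1
  have hN_QI : ∀ z : T, (inner C (QI z) (QI z) : C) ≤ (kQ ^ 2 : ℝ) • (inner C z z : C) :=
    tensor_op_inner_le m tm htm_inner htm_dense QI Q Qadj hQI hQ_adj kQ hkQ0
      (fun x => (Q.le_opNorm x).trans
        (mul_le_mul_of_nonneg_right (le_max_left _ _) (norm_nonneg x)))
  have hN_QinvI : ∀ z : T, (inner C (QinvI z) (QinvI z) : C) ≤ (kI ^ 2 : ℝ) • (inner C z z : C) :=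
    tensor_op_inner_le m tm htm_inner htm_dense QinvI Qinv Qadjinv hQinvI hQinv_adj kI hkI0
      (fun x => (Qinv.le_opNorm x).trans
        (mul_le_mul_of_nonneg_right (le_max_left _ _) (norm_nonneg x)))
  refine ⟨⟨hadjT, hid1, hid2, hid3, hid4⟩, ?_, ?_, ?_⟩
  · -- conclusion (2)
    intro z
    constructor
    · by_cases hdeg : ‖Qadjinv‖ = 0
      · have hQadjinv0 : Qadjinv = 0 := by
          rwa [ContinuousLinearMap.opNorm_zero_iff] at hdeg
        have hE0 : ∀ x : E, x = 0 := fun x => by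
          have h := hQadj_inv x
          rw [hQadjinv0] at h
          simpa using h.symm
        have hT0 : ∀ w : T, w = 0 := by
          refine eq_on_dense_span htm_dense (f := fun w : T => w) (g := fun _ => (0:T))
            continuous_id continuous_const ?_ rfl ?_ ?_
          · rintro t ⟨x, y, rfl⟩
            rw [hE0 x]
            simp
          · intro a b ha hb
            rw [ha, hb, add_zero]
          · intro c a h
            rw [h, smul_zero]
        rw [hT0 z]
        simp [CFC.sqrt_zero]
      · have h1 : (inner C z z : C) ≤ (‖Qadjinv‖ ^ 2 : ℝ) • inner C (QadjI z) (QadjI z) := by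
          have h := hN_QadjinvI (QadjI z)
          rwa [hid3 z] at h
        have h2 : CFC.sqrt (inner C z z : C) ≤
            ‖Qadjinv‖ • CFC.sqrt (inner C (QadjI z) (QadjI z) : C) := by
          have h := cfc_sqrt_mono RightCStarModule.inner_self_nonneg h1
          rwa [cfc_sqrt_real_smul_sq _ (norm_nonneg _) RightCStarModule.inner_self_nonneg] at h
        have h3 := smul_le_smul_of_nonneg_left h2 (inv_nonneg.mpr (norm_nonneg Qadjinv))
        rwa [smul_smul, inv_mul_cancel₀ hdeg, one_smul] at h3
    · have h1 := hN_QadjI z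
      have h2 := cfc_sqrt_mono RightCStarModule.inner_self_nonneg h1
      rwa [cfc_sqrt_real_smul_sq _ (norm_nonneg Q) RightCStarModule.inner_self_nonneg] at h2
  · -- conclusion (3)
    have hkI2 : (0:ℝ) < kI ^ 2 := by positivity
    refine ⟨A₀ / kI ^ 2, B₀ * kQ ^ 2, div_pos hA₀ hkI2, ?_, ?_⟩
    · have h1 : (1:ℝ) ≤ kI ^ 2 := by nlinarith [hkI1]
      have h2 : (1:ℝ) ≤ kQ ^ 2 := by nlinarith [hkQ1]
      calc A₀ / kI ^ 2 ≤ A₀ := div_le_self hA₀.le h1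
        _ ≤ B₀ := hAB₀
        _ ≤ B₀ * kQ ^ 2 := le_mul_of_one_le_right (hA₀.le.trans hAB₀) h2
    · intro z
      have hterm : ∀ i, (inner C z (QadjI (Ts i)) : C) * (inner C (QadjI (Ts i)) z : C)
          = (inner C (QI z) (Ts i) : C) * (inner C (Ts i) (QI z) : C) := by
        intro i
        rw [← hadjT z (Ts i)]
        congr 1
        rw [← RightCStarModule.star_inner (A := C), ← hadjT z (Ts i), RightCStarModule.star_inner]
      refine ⟨?_, ?_, ?_⟩
      · exact (summable_congr fun i => by rw [hterm i]).mpr (hTs_sum (QI z))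
      · rw [tsum_congr hterm]
        have hts := hTs_lower (QI z)
        have hzz : (inner C z z : C) ≤ (kI ^ 2 : ℝ) • inner C (QI z) (QI z) := by
          have h := hN_QinvI (QI z)
          rwa [hid1 z] at h
        have hA1 : (A₀ / kI ^ 2) • (inner C z z : C) ≤ A₀ • inner C (QI z) (QI z) := by
          have h := smul_le_smul_of_nonneg_left hzz (div_pos hA₀ hkI2).le
          rwa [smul_smul, div_mul_cancel₀ A₀ hkI2.ne'] at h
        exact hA1.trans hts
      · rw [tsum_congr hterm]
        have hts := hTs_upper (QI z)
        have hB1 : B₀ • (inner C (QI z) (QI z) : C) ≤ (B₀ * kQ ^ 2) • inner C z z := by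
          have h := smul_le_smul_of_nonneg_left (hN_QI z) (hA₀.le.trans hAB₀)
          rwa [smul_smul] at h
        exact hts.trans hB1
  · -- conclusion (4)
    intro z
    have h := (hS (QadjinvI z)).mapL QadjI
    have hmodQadjI : ∀ (c : C) (t : T), QadjI (t <• c) = QadjI t <• c := by
      intro c t
      refine CSMAdj.eq_of_inner (A := C) fun w => ?_
      rw [← hadjT w (t <• c), RightCStarModule.inner_op_smul_right, hadjT w t,
        ← RightCStarModule.inner_op_smul_right]
    have hfun : (fun i => QadjI (Ts i)
          <• (inner C (QinvI (S (QadjinvI (QadjI (Ts i))))) z : C))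
        = fun i => QadjI (Ts i <• (inner C (S (Ts i)) (QadjinvI z) : C)) := by
      funext i
      rw [hid3 (Ts i), hadjT_inv (S (Ts i)) z, hmodQadjI]
    rw [hfun]
    rw [hid4 z] at h
    exact h
end

section
/- Let {W_i}_{i∈I} be a frame of subspaces for H with respect to weights {u_i} and frame operator S_{W,u}, and let {Z_j}_{j∈J} be a frame of subspaces for K with respect to weights {v_j} and frame operator S_{Z,v}. Then S_{W,u} ⊗ S_{Z,v} is the frame operator of the frame of subspaces {W_i ⊗ Z_j}_{i∈I, j∈J} of H⊗K with respect to the weights {u_i v_j}_{i∈I, j∈J}; that is, for all z ∈ H⊗K, (S_{W,u}⊗S_{Z,v})(z) = Σ_{i∈I} Σ_{j∈J} u_i² v_j² (π_{W_i}⊗π_{Z_j})(z). -/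
/-!
On an elementary tensor the weak series `⟪x' ⊗ y', Σ u_i² v_j² π_{W_i} x ⊗ π_{Z_j} y⟫` is the
product of two absolutely convergent series with sums `⟪x', S_W x⟫` and `⟪y', S_Z y⟫`, so the
identity holds weakly on the dense span of elementary tensors. Writing `c_p π_p` for the terms
`u_i² v_j² π_{W_i ⊗ Z_j}`, positivity of the projections turns this into
`Σ_{p ∈ G} c_p ‖π_p z‖² ≤ ‖S_W ⊗ S_Z‖ ‖z‖²` for all finite `G` and all `z`, and Cauchy–Schwarz
then shows that the partial sums `Σ_{p ∈ G} c_p π_p z` are Cauchy and uniformly bounded as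
operators. Hence the series converges in norm, to `(S_W ⊗ S_Z) z` on the span, and then
everywhere by equicontinuity.
-/

open Filter Topology RCLike Submodule
open scoped InnerProductSpace

theorem hasSum_apply_of_mem_span {R R₂ M N ι : Type*} [Semiring R] [Semiring R₂] {σ : R →+* R₂}
    [AddCommMonoid M] [Module R M] [AddCommMonoid N] [Module R₂ N] [TopologicalSpace N]
    [ContinuousAdd N] [ContinuousConstSMul R₂ N]
    (f : ι → M →ₛₗ[σ] N) (g : M →ₛₗ[σ] N) {s : Set M}
    (hs : ∀ x ∈ s, HasSum (fun i => f i x) (g x)) {x : M} (hx : x ∈ span R s) :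
    HasSum (fun i => f i x) (g x) := by
  induction hx using Submodule.span_induction with
  | mem x hx => exact hs x hx
  | zero => simp
  | add x y _ _ hx hy => simpa using hx.add hy
  | smul a x _ hx => simpa using hx.const_smul (σ a)

theorem hasSum_apply_of_dense_of_norm_sum_le {𝕜 E F ι : Type*} [NontriviallyNormedField 𝕜]
    [SeminormedAddCommGroup E] [NormedSpace 𝕜 E] [NormedAddCommGroup F] [NormedSpace 𝕜 F]
    (f : ι → E →L[𝕜] F) (S : E →L[𝕜] F) {C : ℝ}
    (hC : ∀ (G : Finset ι) x, ‖∑ p ∈ G, f p x‖ ≤ C * ‖x‖) {D : Set E} (hD : Dense D)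
    (h : ∀ x ∈ D, HasSum (fun p => f p x) (S x)) (x : E) : HasSum (fun p => f p x) (S x) := by
  let R (G : Finset ι) : E →L[𝕜] F := ∑ p ∈ G, f p
  have hR (G : Finset ι) (x : E) : R G x = ∑ p ∈ G, f p x := by
    simp [R]
  have hequi : Equicontinuous fun G => ⇑(R G) := by
    have hTFAE := (NormedSpace.equicontinuous_TFAE R).out 3 1
    exact hTFAE.1 ⟨C, fun G x => hR G x ▸ hC G x⟩
  have hclosed : IsClosed {x | HasSum (fun p => f p x) (S x)} := by
    simpa only [HasSum, ← hR] using hequi.isClosed_setOfPred_tendsto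
      (l := (SummationFilter.unconditional ι).filter) S.continuous
  exact hclosed.closure_subset_iff.2 h (hD.closure_eq ▸ Set.mem_univ x)

section InnerProductSpace

variable {𝕜 T ι : Type*} [RCLike 𝕜] [NormedAddCommGroup T] [InnerProductSpace 𝕜 T]

variable (𝕜) in
theorem HasSum.inner_left {f : ι → T} {a : T} (h : HasSum f a) (x : T) :
    HasSum (fun i => ⟪x, f i⟫_𝕜) ⟪x, a⟫_𝕜 :=
  (innerSL 𝕜 x).hasSum h

theorem hasSum_inner_of_mem_span {Q : ι → T →L[𝕜] T} {S : T →L[𝕜] T} {s : Set T}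
    (h : ∀ g ∈ s, ∀ g' ∈ s, HasSum (fun p => ⟪g', Q p g⟫_𝕜) ⟪g', S g⟫_𝕜) {z z' : T}
    (hz : z ∈ span 𝕜 s) (hz' : z' ∈ span 𝕜 s) :
    HasSum (fun p => ⟪z', Q p z⟫_𝕜) ⟪z', S z⟫_𝕜 := by
  have hleft (g' : T) (hg' : g' ∈ s) : HasSum (fun p => ⟪g', Q p z⟫_𝕜) ⟪g', S z⟫_𝕜 :=
    hasSum_apply_of_mem_span (fun p => (innerₛₗ 𝕜 g').comp (Q p : T →ₗ[𝕜] T))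
      ((innerₛₗ 𝕜 g').comp (S : T →ₗ[𝕜] T)) (fun g hg => h g hg g' hg') hz
  exact hasSum_apply_of_mem_span (fun p => (innerₛₗ 𝕜).flip (Q p z)) ((innerₛₗ 𝕜).flip (S z))
    hleft hz'

theorem Submodule.inner_starProjection_starProjection (K : Submodule 𝕜 T)
    [K.HasOrthogonalProjection] (x y : T) :
    ⟪K.starProjection x, K.starProjection y⟫_𝕜 = ⟪x, K.starProjection y⟫_𝕜 := by
  rw [K.inner_starProjection_left_eq_right,
    starProjection_eq_self_iff.2 (K.starProjection_apply_mem y)]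

variable [NormedSpace ℝ T] [IsScalarTower ℝ 𝕜 T]

theorem Submodule.re_inner_smul_starProjection (K : Submodule 𝕜 T)
    [K.HasOrthogonalProjection] (r : ℝ) (x : T) :
    re ⟪x, r • K.starProjection x⟫_𝕜 = r * ‖K.starProjection x‖ ^ 2 := by
  rw [inner_smul_right_eq_smul, smul_re, ← K.inner_starProjection_left_eq_right,
    re_inner_starProjection_eq_normSq]
  rfl

variable {V : ι → Submodule 𝕜 T} [∀ p, (V p).HasOrthogonalProjection] {c : ι → ℝ}

theorem hasSum_mul_norm_starProjection_sq {x : T} {a : 𝕜}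
    (h : HasSum (fun p => ⟪x, c p • (V p).starProjection x⟫_𝕜) a) :
    HasSum (fun p => c p * ‖(V p).starProjection x‖ ^ 2) (re a) := by
  simpa only [reCLM_apply, re_inner_smul_starProjection] using reCLM.hasSum h

theorem summable_norm_inner_smul_starProjection (hc : ∀ p, 0 ≤ c p) {S : T → T}
    (hS : ∀ x, HasSum (fun p => c p • (V p).starProjection x) (S x)) (x x' : T) :
    Summable fun p => ‖⟪x', c p • (V p).starProjection x⟫_𝕜‖ := by
  have hsq (x : T) : Summable fun p => c p * ‖(V p).starProjection x‖ ^ 2 :=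
    (hasSum_mul_norm_starProjection_sq ((hS x).inner_left 𝕜 x)).summable
  refine ((hsq x').add (hsq x)).of_nonneg_of_le (fun p => norm_nonneg _) (fun p => ?_)
  rw [inner_smul_right_eq_smul, norm_smul, Real.norm_of_nonneg (hc p),
    ← inner_starProjection_starProjection]
  have hcp := hc p
  calc c p * ‖⟪(V p).starProjection x', (V p).starProjection x⟫_𝕜‖
      ≤ c p * (‖(V p).starProjection x'‖ * ‖(V p).starProjection x‖) := by
        gcongr
        exact norm_inner_le_norm _ _
    _ ≤ c p * ‖(V p).starProjection x'‖ ^ 2 + c p * ‖(V p).starProjection x‖ ^ 2 := by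
        nlinarith [two_mul_le_add_sq ‖(V p).starProjection x'‖ ‖(V p).starProjection x‖,
          sq_nonneg ‖(V p).starProjection x'‖, sq_nonneg ‖(V p).starProjection x‖]

theorem sum_mul_norm_starProjection_sq_le (hc : ∀ p, 0 ≤ c p) (S : T →L[𝕜] T)
    {D : Set T} (hD : Dense D)
    (h : ∀ z ∈ D, HasSum (fun p => ⟪z, c p • (V p).starProjection z⟫_𝕜) ⟪z, S z⟫_𝕜)
    (G : Finset ι) (z : T) :
    ∑ p ∈ G, c p * ‖(V p).starProjection z‖ ^ 2 ≤ ‖S‖ * ‖z‖ ^ 2 := by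
  have hclosed :
      IsClosed {z : T | ∑ p ∈ G, c p * ‖(V p).starProjection z‖ ^ 2 ≤ ‖S‖ * ‖z‖ ^ 2} :=
    isClosed_le (by fun_prop) (by fun_prop)
  refine hclosed.closure_subset_iff.2 (fun z hz => ?_) (hD.closure_eq ▸ Set.mem_univ z)
  calc ∑ p ∈ G, c p * ‖(V p).starProjection z‖ ^ 2 ≤ re ⟪z, S z⟫_𝕜 :=
        sum_le_hasSum G (fun p _ => mul_nonneg (hc p) (sq_nonneg _))
          (hasSum_mul_norm_starProjection_sq (h z hz))
    _ ≤ ‖z‖ * ‖S z‖ := re_inner_le_norm z (S z)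
    _ ≤ ‖z‖ * (‖S‖ * ‖z‖) := by gcongr; exact S.le_opNorm z
    _ = ‖S‖ * ‖z‖ ^ 2 := by ring

theorem norm_sum_smul_starProjection_sq_le (hc : ∀ p, 0 ≤ c p) {M : ℝ} (hM0 : 0 ≤ M)
    {G : Finset ι} (hM : ∀ t, ∑ p ∈ G, c p * ‖(V p).starProjection t‖ ^ 2 ≤ M * ‖t‖ ^ 2) (z : T) :
    ‖∑ p ∈ G, c p • (V p).starProjection z‖ ^ 2
      ≤ M * ∑ p ∈ G, c p * ‖(V p).starProjection z‖ ^ 2 := by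
  set t := ∑ p ∈ G, c p • (V p).starProjection z
  have hnorm : ‖t‖ ^ 2 = ∑ p ∈ G, re ⟪t, c p • (V p).starProjection z⟫_𝕜 := by
    rw [← map_sum, ← inner_sum]
    exact (inner_self_eq_norm_sq (𝕜 := 𝕜) t).symm
  have hCS : (‖t‖ ^ 2) ^ 2 ≤ (∑ p ∈ G, c p * ‖(V p).starProjection t‖ ^ 2)
      * ∑ p ∈ G, c p * ‖(V p).starProjection z‖ ^ 2 := by
    rw [hnorm]
    refine Finset.sum_sq_le_sum_mul_sum_of_sq_le_mul G
      (fun p _ => mul_nonneg (hc p) (sq_nonneg _)) (fun p _ => mul_nonneg (hc p) (sq_nonneg _))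
      (fun p _ => ?_)
    rw [inner_smul_right_eq_smul, smul_re, ← inner_starProjection_starProjection,
      ← sq_abs, abs_mul, abs_of_nonneg (hc p)]
    have hcp := hc p
    have hre := (abs_re_le_norm _).trans
      (norm_inner_le_norm (𝕜 := 𝕜) ((V p).starProjection t) ((V p).starProjection z))
    calc (c p * |re ⟪(V p).starProjection t, (V p).starProjection z⟫_𝕜|) ^ 2
        ≤ (c p * (‖(V p).starProjection t‖ * ‖(V p).starProjection z‖)) ^ 2 := by gcongr
      _ = _ := by ring
  have hsum_nonneg : 0 ≤ ∑ p ∈ G, c p * ‖(V p).starProjection z‖ ^ 2 :=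
    Finset.sum_nonneg fun p _ => mul_nonneg (hc p) (sq_nonneg _)
  rcases (sq_nonneg ‖t‖).eq_or_lt with ht | ht
  · rw [← ht]
    exact mul_nonneg hM0 hsum_nonneg
  · refine le_of_mul_le_mul_left ?_ ht
    calc ‖t‖ ^ 2 * ‖t‖ ^ 2
        ≤ (M * ‖t‖ ^ 2) * ∑ p ∈ G, c p * ‖(V p).starProjection z‖ ^ 2 := by
          rw [← sq]
          exact hCS.trans (mul_le_mul_of_nonneg_right (hM t) hsum_nonneg)
      _ = ‖t‖ ^ 2 * (M * ∑ p ∈ G, c p * ‖(V p).starProjection z‖ ^ 2) := by ring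

theorem summable_smul_starProjection [CompleteSpace T] (hc : ∀ p, 0 ≤ c p) {M : ℝ}
    (hM0 : 0 ≤ M)
    (hM : ∀ (G : Finset ι) t, ∑ p ∈ G, c p * ‖(V p).starProjection t‖ ^ 2 ≤ M * ‖t‖ ^ 2)
    (z : T) : Summable fun p => c p • (V p).starProjection z := by
  have hscalar : Summable fun p => c p * ‖(V p).starProjection z‖ ^ 2 :=
    summable_of_sum_le (fun p => mul_nonneg (hc p) (sq_nonneg _)) (fun G => hM G z)
  refine summable_iff_vanishing_norm.2 fun ε hε => ?_
  obtain ⟨G₀, hG₀⟩ := summable_iff_vanishing_norm.1 hscalar (ε ^ 2 / (M + 1)) (by positivity)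
  refine ⟨G₀, fun G hG => pow_lt_pow_iff_left₀ (norm_nonneg _) hε.le two_ne_zero |>.1 ?_⟩
  have htail := (le_abs_self _).trans_lt ((Real.norm_eq_abs _).symm ▸ hG₀ G hG)
  calc ‖∑ p ∈ G, c p • (V p).starProjection z‖ ^ 2
      ≤ M * ∑ p ∈ G, c p * ‖(V p).starProjection z‖ ^ 2 :=
        norm_sum_smul_starProjection_sq_le hc hM0 (hM G) z
    _ ≤ (M + 1) * ∑ p ∈ G, c p * ‖(V p).starProjection z‖ ^ 2 := by
        gcongr
        · exact Finset.sum_nonneg fun p _ => mul_nonneg (hc p) (sq_nonneg _)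
        · linarith
    _ < (M + 1) * (ε ^ 2 / (M + 1)) := mul_lt_mul_of_pos_left htail (by linarith)
    _ = ε ^ 2 := by field_simp

theorem hasSum_smul_starProjection_of_dense_span [CompleteSpace T] (hc : ∀ p, 0 ≤ c p)
    (S : T →L[𝕜] T) {s : Set T} (hs : Dense (span 𝕜 s : Set T))
    (h : ∀ g ∈ s, ∀ g' ∈ s,
      HasSum (fun p => ⟪g', c p • (V p).starProjection g⟫_𝕜) ⟪g', S g⟫_𝕜) (z : T) :
    HasSum (fun p => c p • (V p).starProjection z) (S z) := by
  have hweak (z) (hz : z ∈ span 𝕜 s) (z') (hz' : z' ∈ span 𝕜 s) :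
      HasSum (fun p => ⟪z', c p • (V p).starProjection z⟫_𝕜) ⟪z', S z⟫_𝕜 :=
    hasSum_inner_of_mem_span (Q := fun p => c p • (V p).starProjection) h hz hz'
  have hbound := sum_mul_norm_starProjection_sq_le hc S hs fun z hz => hweak z hz z hz
  have hspan (z) (hz : z ∈ span 𝕜 s) :
      HasSum (fun p => c p • (V p).starProjection z) (S z) := by
    have hsum := (summable_smul_starProjection hc (norm_nonneg S) hbound z).hasSum
    convert hsum
    refine hs.eq_of_inner_right 𝕜 fun z' hz' => ?_
    exact (hweak z hz z' hz').unique (hsum.inner_left 𝕜 z')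
  refine hasSum_apply_of_dense_of_norm_sum_le (fun p => c p • (V p).starProjection) S
    (C := ‖S‖) (fun G z => ?_) hs hspan z
  refine pow_le_pow_iff_left₀ (norm_nonneg _) (by positivity) two_ne_zero |>.1 ?_
  calc ‖∑ p ∈ G, c p • (V p).starProjection z‖ ^ 2
      ≤ ‖S‖ * ∑ p ∈ G, c p * ‖(V p).starProjection z‖ ^ 2 :=
        norm_sum_smul_starProjection_sq_le hc (norm_nonneg S) (hbound G) z
    _ ≤ ‖S‖ * (‖S‖ * ‖z‖ ^ 2) := by gcongr; exact hbound G z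
    _ = (‖S‖ * ‖z‖) ^ 2 := by ring

end InnerProductSpace

section TensorProduct

variable {𝕜 H K T : Type*} [RCLike 𝕜] [NormedAddCommGroup H] [InnerProductSpace 𝕜 H]
  [NormedAddCommGroup K] [InnerProductSpace 𝕜 K] [NormedAddCommGroup T] [InnerProductSpace 𝕜 T]

def tensorSubmodule (tm : H →ₗ[𝕜] K →ₗ[𝕜] T) (W : Submodule 𝕜 H) (Z : Submodule 𝕜 K) :
    Submodule 𝕜 T :=
  (span 𝕜 {s | ∃ w ∈ W, ∃ z ∈ Z, tm w z = s}).topologicalClosure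

instance [CompleteSpace T] (tm : H →ₗ[𝕜] K →ₗ[𝕜] T) (W : Submodule 𝕜 H) (Z : Submodule 𝕜 K) :
    (tensorSubmodule tm W Z).HasOrthogonalProjection :=
  inferInstanceAs
    (span 𝕜 {s | ∃ w ∈ W, ∃ z ∈ Z, tm w z = s}).topologicalClosure.HasOrthogonalProjection

theorem starProjection_tensorSubmodule_apply {tm : H →ₗ[𝕜] K →ₗ[𝕜] T}
    (htm : ∀ (x x' : H) (y y' : K), ⟪tm x y, tm x' y'⟫_𝕜 = ⟪x, x'⟫_𝕜 * ⟪y, y'⟫_𝕜)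
    (W : Submodule 𝕜 H) [W.HasOrthogonalProjection] (Z : Submodule 𝕜 K)
    [Z.HasOrthogonalProjection] [(tensorSubmodule tm W Z).HasOrthogonalProjection]
    (x : H) (y : K) :
    (tensorSubmodule tm W Z).starProjection (tm x y)
      = tm (W.starProjection x) (Z.starProjection y) := by
  refine eq_starProjection_of_mem_orthogonal (le_topologicalClosure _ (subset_span
    ⟨_, W.starProjection_apply_mem x, _, Z.starProjection_apply_mem y, rfl⟩)) ?_
  rw [tensorSubmodule, orthogonal_closure]
  refine isOrtho_span.2 (fun v hv => ?_) (mem_span_singleton_self _)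
  rintro _ ⟨w, hw, z, hz, rfl⟩
  rw [Set.mem_singleton_iff.1 hv, inner_sub_left, htm, htm, inner_starProjection_left_eq_right,
    inner_starProjection_left_eq_right, starProjection_eq_self_iff.2 hw,
    starProjection_eq_self_iff.2 hz, sub_self]

variable [NormedSpace ℝ H] [IsScalarTower ℝ 𝕜 H] [NormedSpace ℝ K] [IsScalarTower ℝ 𝕜 K]
  [NormedSpace ℝ T] [IsScalarTower ℝ 𝕜 T]

theorem hasSum_inner_smul_tmul_starProjection {I J : Type*} {tm : H →ₗ[𝕜] K →ₗ[𝕜] T}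
    (htm : ∀ (x x' : H) (y y' : K), ⟪tm x y, tm x' y'⟫_𝕜 = ⟪x, x'⟫_𝕜 * ⟪y, y'⟫_𝕜)
    {W : I → Submodule 𝕜 H} [∀ i, (W i).HasOrthogonalProjection]
    {Z : J → Submodule 𝕜 K} [∀ j, (Z j).HasOrthogonalProjection]
    {a : I → ℝ} {b : J → ℝ} (ha : ∀ i, 0 ≤ a i) (hb : ∀ j, 0 ≤ b j) {SW : H → H} {SZ : K → K}
    (hSW : ∀ x, HasSum (fun i => a i • (W i).starProjection x) (SW x))
    (hSZ : ∀ y, HasSum (fun j => b j • (Z j).starProjection y) (SZ y)) (x x' : H) (y y' : K) :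
    HasSum (fun p : I × J => ⟪tm x' y',
        (a p.1 * b p.2) • tm ((W p.1).starProjection x) ((Z p.2).starProjection y)⟫_𝕜)
      ⟪tm x' y', tm (SW x) (SZ y)⟫_𝕜 := by
  have hW := summable_norm_inner_smul_starProjection ha hSW x x'
  have hZ := summable_norm_inner_smul_starProjection hb hSZ y y'
  have hx := (hSW x).inner_left 𝕜 x'
  have hy := (hSZ y).inner_left 𝕜 y'
  have hWZ := summable_mul_of_summable_norm hW hZ
  have hprod := hx.mul hy hWZ
  rw [htm]
  refine hprod.congr_fun fun p => ?_
  rw [inner_smul_right_eq_smul, inner_smul_right_eq_smul, inner_smul_right_eq_smul, htm,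
    smul_mul_smul_comm]

end TensorProduct

theorem tensor_product_frame_operator_of_subspaces_general
    {H K T : Type*}
    [NormedAddCommGroup H] [InnerProductSpace ℂ H]
    [NormedAddCommGroup K] [InnerProductSpace ℂ K]
    [NormedAddCommGroup T] [InnerProductSpace ℂ T] [CompleteSpace T]
    {I J : Type*}
    -- the tensor product structure
    (tm : H →ₗ[ℂ] K →ₗ[ℂ] T)
    (htm_inner : ∀ (x x' : H) (y y' : K),
      (inner ℂ (tm x y) (tm x' y') : ℂ) = (inner ℂ x x' : ℂ) * (inner ℂ y y' : ℂ))
    (htm_dense : Dense (Submodule.span ℂ {z : T | ∃ x y, tm x y = z} : Set T))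
    -- the weights
    (u : I → ℝ) (v : J → ℝ)
    -- the families of closed subspaces
    (W : I → Submodule ℂ H) [∀ i, CompleteSpace (W i)]
    (Z : J → Submodule ℂ K) [∀ j, CompleteSpace (Z j)]
    -- the frame operators `S_W` and `S_Z`
    (SW : H →L[ℂ] H)
    (hSW : ∀ x : H, HasSum (fun i => u i ^ 2 • (Submodule.orthogonalProjectionOnto (W i) x : H)) (SW x))
    (SZ : K →L[ℂ] K)
    (hSZ : ∀ y : K, HasSum (fun j => v j ^ 2 • (Submodule.orthogonalProjectionOnto (Z j) y : K)) (SZ y))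
    -- `SWZ` is the tensor product operator `S_W ⊗ S_Z` on `T = H ⊗ K`
    (SWZ : T →L[ℂ] T)
    (hSWZ : ∀ (x : H) (y : K), SWZ (tm x y) = tm (SW x) (SZ y))
    -- the orthogonal projections `π_{W i} ⊗ π_{Z j}` of `T` onto `W i ⊗ Z j`
    (P : I → J → T →L[ℂ] T)
    (hP_mem : ∀ i j (t : T),
      P i j t ∈ (Submodule.span ℂ
        {s : T | ∃ w ∈ W i, ∃ z ∈ Z j, tm w z = s}).topologicalClosure)
    (hP_orth : ∀ i j (t : T),
      t - P i j t ∈ ((Submodule.span ℂ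
        {s : T | ∃ w ∈ W i, ∃ z ∈ Z j, tm w z = s}).topologicalClosure)ᗮ) :
    -- conclusion: `S_W ⊗ S_Z` is the frame operator of `{W i ⊗ Z j}` w.r.t. `{u i * v j}`
    ∀ z : T, HasSum (fun p : I × J => (u p.1 * v p.2) ^ 2 • P p.1 p.2 z) (SWZ z) := by
  have hP (i : I) (j : J) : P i j = (tensorSubmodule tm (W i) (Z j)).starProjection :=
    ContinuousLinearMap.ext fun t => (eq_starProjection_of_mem_orthogonal
      (K := tensorSubmodule tm (W i) (Z j)) (hP_mem i j t) (hP_orth i j t)).symm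
  have hweak : ∀ g ∈ {z : T | ∃ x y, tm x y = z}, ∀ g' ∈ {z : T | ∃ x y, tm x y = z},
      HasSum (fun p : I × J => ⟪g', (u p.1 * v p.2) ^ 2 •
        (tensorSubmodule tm (W p.1) (Z p.2)).starProjection g⟫_ℂ) ⟪g', SWZ g⟫_ℂ := by
    rintro _ ⟨x, y, rfl⟩ _ ⟨x', y', rfl⟩
    simp only [starProjection_tensorSubmodule_apply htm_inner, mul_pow, hSWZ]
    exact hasSum_inner_smul_tmul_starProjection htm_inner (fun i => sq_nonneg (u i))
      (fun j => sq_nonneg (v j)) hSW hSZ x x' y y'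
  intro z
  simpa only [hP] using
    hasSum_smul_starProjection_of_dense_span (fun p => sq_nonneg _) SWZ htm_dense hweak z

/-- If `S_W` and `S_Z` are the frame operators of frames of subspaces
`{W i}` (weights `u i`) of `H` and `{Z j}` (weights `v j`) of `K`, then `S_W ⊗ S_Z` is
the frame operator of the frame of subspaces `{W i ⊗ Z j}` of `H ⊗ K` with respect to
the weights `{u i * v j}`:  for all `z ∈ H ⊗ K`,
`(S_W ⊗ S_Z)(z) = Σ_{i,j} (u i)² (v j)² (π_{W i} ⊗ π_{Z j})(z)`. -/
theorem tensor_product_frame_operator_of_subspaces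
    {H K T : Type*}
    [NormedAddCommGroup H] [InnerProductSpace ℂ H] [CompleteSpace H]
      [TopologicalSpace.SeparableSpace H]
    [NormedAddCommGroup K] [InnerProductSpace ℂ K] [CompleteSpace K]
      [TopologicalSpace.SeparableSpace K]
    [NormedAddCommGroup T] [InnerProductSpace ℂ T] [CompleteSpace T]
    {I J : Type*} [Countable I] [Countable J]
    -- the tensor product structure
    (tm : H →ₗ[ℂ] K →ₗ[ℂ] T)
    (htm_inner : ∀ (x x' : H) (y y' : K),
      (inner ℂ (tm x y) (tm x' y') : ℂ) = (inner ℂ x x' : ℂ) * (inner ℂ y y' : ℂ))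
    (htm_dense : Dense (Submodule.span ℂ {z : T | ∃ x y, tm x y = z} : Set T))
    -- the weights
    (u : I → ℝ) (v : J → ℝ) (hu : ∀ i, 0 < u i) (hv : ∀ j, 0 < v j)
    -- the families of closed subspaces
    (W : I → Submodule ℂ H) [∀ i, CompleteSpace (W i)]
    (Z : J → Submodule ℂ K) [∀ j, CompleteSpace (Z j)]
    -- frame-of-subspaces conditions
    (A B A' B' : ℝ) (hA : 0 < A) (hAB : A ≤ B) (hA' : 0 < A') (hAB' : A' ≤ B')
    (hW_lower : ∀ x : H,
      A * ‖x‖ ^ 2 ≤ ∑' i, u i ^ 2 * ‖(Submodule.orthogonalProjectionOnto (W i) x : H)‖ ^ 2)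
    (hW_upper : ∀ x : H,
      ∑' i, u i ^ 2 * ‖(Submodule.orthogonalProjectionOnto (W i) x : H)‖ ^ 2 ≤ B * ‖x‖ ^ 2)
    (hZ_lower : ∀ y : K,
      A' * ‖y‖ ^ 2 ≤ ∑' j, v j ^ 2 * ‖(Submodule.orthogonalProjectionOnto (Z j) y : K)‖ ^ 2)
    (hZ_upper : ∀ y : K,
      ∑' j, v j ^ 2 * ‖(Submodule.orthogonalProjectionOnto (Z j) y : K)‖ ^ 2 ≤ B' * ‖y‖ ^ 2)
    -- the frame operators `S_W` and `S_Z`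
    (SW : H →L[ℂ] H)
    (hSW : ∀ x : H, HasSum (fun i => u i ^ 2 • (Submodule.orthogonalProjectionOnto (W i) x : H)) (SW x))
    (SZ : K →L[ℂ] K)
    (hSZ : ∀ y : K, HasSum (fun j => v j ^ 2 • (Submodule.orthogonalProjectionOnto (Z j) y : K)) (SZ y))
    -- `SWZ` is the tensor product operator `S_W ⊗ S_Z` on `T = H ⊗ K`
    (SWZ : T →L[ℂ] T)
    (hSWZ : ∀ (x : H) (y : K), SWZ (tm x y) = tm (SW x) (SZ y))
    -- the orthogonal projections `π_{W i} ⊗ π_{Z j}` of `T` onto `W i ⊗ Z j`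
    (P : I → J → T →L[ℂ] T)
    (hP_mem : ∀ i j (t : T),
      P i j t ∈ (Submodule.span ℂ
        {s : T | ∃ w ∈ W i, ∃ z ∈ Z j, tm w z = s}).topologicalClosure)
    (hP_orth : ∀ i j (t : T),
      t - P i j t ∈ ((Submodule.span ℂ
        {s : T | ∃ w ∈ W i, ∃ z ∈ Z j, tm w z = s}).topologicalClosure)ᗮ) :
    -- conclusion: `S_W ⊗ S_Z` is the frame operator of `{W i ⊗ Z j}` w.r.t. `{u i * v j}`
    ∀ z : T, HasSum (fun p : I × J => (u p.1 * v p.2) ^ 2 • P p.1 p.2 z) (SWZ z) :=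
  tensor_product_frame_operator_of_subspaces_general tm htm_inner htm_dense u v W Z SW hSW SZ hSZ
    SWZ hSWZ P hP_mem hP_orth
end

section
/- Let π: G₁ → B(H) and σ: G₂ → B(K) be frame representations of discrete countable abelian groups. If {π(g)v}_{g∈G₁} is a frame for H with frame bounds A₁, B₁ and {σ(h)w}_{h∈G₂} is a frame for K with frame bounds A₂, B₂, then {(π⊗σ)(g,h)(v⊗w)}_{(g,h)∈G₁⊕G₂} is a frame for the Hilbert space tensor product H⊗K with frame bounds A₁A₂ and B₁B₂. -/
/-!
For `z ∈ H ⊗ K` let `u_g ∈ K` be the partial inner product `⟪u_g, y⟫ = ⟪z, π(g)v ⊗ y⟫`, so that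
`⟪z, π(g)v ⊗ σ(h)w⟫ = ⟪u_g, σ(h)w⟫` and the frame bounds of `w`, applied fibrewise in `g`, trap
the double sum between `A₂ ∑ ‖u_g‖²` and `B₂ ∑ ‖u_g‖²`. Expanding `‖u_g‖²` in a Hilbert basis
`(f_j)` of `K` and swapping the sums gives `∑_j ∑_g |⟪R_j, π(g)v⟫|²` with `R_j ∈ H` the contraction
of `z` against `f_j`, which the frame bounds of `v` trap between `A₁ ∑ ‖R_j‖²` and `B₁ ∑ ‖R_j‖²`;
finally `∑_j ‖R_j‖² = ‖z‖²` is Parseval for the product basis `e_i ⊗ f_j` of `H ⊗ K`.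
-/

open scoped InnerProductSpace
open Set Submodule ContinuousLinearMap

theorem summable_and_bounds_of_fiberwise {α β : Type*} {F : α × β → ℝ} {c : α → ℝ} {A B : ℝ}
    (hF : 0 ≤ F) (hfiber : ∀ a, Summable fun b => F (a, b)) (hc : Summable c)
    (hlower : ∀ a, A * c a ≤ ∑' b, F (a, b)) (hupper : ∀ a, ∑' b, F (a, b) ≤ B * c a) :
    Summable F ∧ A * ∑' a, c a ≤ ∑' p, F p ∧ ∑' p, F p ≤ B * ∑' a, c a := by
  have hsum : Summable F := (summable_prod_of_nonneg hF).2
    ⟨hfiber, (hc.mul_left B).of_nonneg_of_le (fun a => tsum_nonneg fun b => hF (a, b)) hupper⟩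
  refine ⟨hsum, ?_, ?_⟩ <;> rw [hsum.tsum_prod, ← tsum_mul_left]
  · exact (hc.mul_left A).tsum_le_tsum hlower hsum.prod
  · exact hsum.prod.tsum_le_tsum hupper (hc.mul_left B)

theorem ContinuousLinearMap.apply_apply_mem_topologicalClosure_span {𝕜 E F G : Type*}
    [NontriviallyNormedField 𝕜] [NormedAddCommGroup E] [NormedSpace 𝕜 E] [NormedAddCommGroup F]
    [NormedSpace 𝕜 F] [NormedAddCommGroup G] [NormedSpace 𝕜 G] (B : E →L[𝕜] F →L[𝕜] G)
    {ι κ : Type*} {e : ι → E} {f : κ → F} (he : (span 𝕜 (range e)).topologicalClosure = ⊤)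
    (hf : (span 𝕜 (range f)).topologicalClosure = ⊤) (x : E) (y : F) :
    B x y ∈ (span 𝕜 (range fun p : ι × κ => B (e p.1) (f p.2))).topologicalClosure := by
  have hS : span 𝕜 (range fun p : ι × κ => B (e p.1) (f p.2)) =
      map₂ (toLinearMap₁₂ B) (span 𝕜 (range e)) (span 𝕜 (range f)) := by
    rw [map₂_span_span, image2_range]
    rfl
  set P := Function.uncurry (fun x y => B x y) ⁻¹'
    ((span 𝕜 (range fun p : ι × κ => B (e p.1) (f p.2))).topologicalClosure : Set G)
  have hspan : (span 𝕜 (range e) : Set E) ×ˢ (span 𝕜 (range f) : Set F) ⊆ P := by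
    rintro ⟨x, y⟩ ⟨hx, hy⟩
    apply le_topologicalClosure
    rw [hS]
    exact apply_mem_map₂ _ hx hy
  have hdense : closure ((span 𝕜 (range e) : Set E) ×ˢ (span 𝕜 (range f) : Set F)) = univ := by
    rw [closure_prod_eq, ← topologicalClosure_coe, ← topologicalClosure_coe, he, hf, top_coe,
      top_coe, univ_prod_univ]
  exact closure_minimal hspan (isClosed_topologicalClosure _ |>.preimage B.continuous₂)
    (hdense ▸ mem_univ (x, y))

section Frames

variable (𝕜 : Type*) {E ι : Type*} [RCLike 𝕜] [NormedAddCommGroup E] [InnerProductSpace 𝕜 E]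

def IsFrame (x : ι → E) (A B : ℝ) : Prop :=
  ∀ z : E, Summable (fun i => ‖⟪z, x i⟫_𝕜‖ ^ 2) ∧
    A * ‖z‖ ^ 2 ≤ ∑' i, ‖⟪z, x i⟫_𝕜‖ ^ 2 ∧ ∑' i, ‖⟪z, x i⟫_𝕜‖ ^ 2 ≤ B * ‖z‖ ^ 2

variable {𝕜}

theorem HilbertBasis.hasSum_norm_inner_sq (b : HilbertBasis ι 𝕜 E) (z : E) :
    HasSum (fun i => ‖⟪z, b i⟫_𝕜‖ ^ 2) (‖z‖ ^ 2) := by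
  have h := lp.hasSum_norm (p := 2) (by norm_num) (b.repr z)
  simp only [ENNReal.toReal_ofNat, Real.rpow_two, b.repr_apply_apply,
    LinearIsometryEquiv.norm_map] at h
  simpa only [norm_inner_symm] using h

end Frames

section TensorStructure

variable {𝕜 H K T : Type*} [RCLike 𝕜]
  [NormedAddCommGroup H] [InnerProductSpace 𝕜 H] [NormedAddCommGroup K] [InnerProductSpace 𝕜 K]
  [NormedAddCommGroup T] [InnerProductSpace 𝕜 T]
  {tm : H →ₗ[𝕜] K →ₗ[𝕜] T}

theorem norm_apply_apply_of_inner_eq_mul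
    (htm : ∀ x x' y y', ⟪tm x y, tm x' y'⟫_𝕜 = ⟪x, x'⟫_𝕜 * ⟪y, y'⟫_𝕜) (x : H) (y : K) :
    ‖tm x y‖ = ‖x‖ * ‖y‖ := by
  have h : ‖tm x y‖ ^ 2 = (‖x‖ * ‖y‖) ^ 2 := by
    have := htm x x y y
    simp only [inner_self_eq_norm_sq_to_K] at this
    rw [mul_pow]
    exact_mod_cast this
  exact (pow_left_inj₀ (norm_nonneg _) (by positivity) two_ne_zero).1 h

noncomputable def LinearMap.mkContinuousOfInnerEqMul
    (htm : ∀ x x' y y', ⟪tm x y, tm x' y'⟫_𝕜 = ⟪x, x'⟫_𝕜 * ⟪y, y'⟫_𝕜) :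
    H →L[𝕜] K →L[𝕜] T :=
  tm.mkContinuous₂ 1 fun x y => by rw [norm_apply_apply_of_inner_eq_mul htm, one_mul]

theorem Orthonormal.tensor
    (htm : ∀ x x' y y', ⟪tm x y, tm x' y'⟫_𝕜 = ⟪x, x'⟫_𝕜 * ⟪y, y'⟫_𝕜)
    {ι κ : Type*} {e : ι → H} {f : κ → K} (he : Orthonormal 𝕜 e) (hf : Orthonormal 𝕜 f) :
    Orthonormal 𝕜 fun p : ι × κ => tm (e p.1) (f p.2) := by
  classical
  rw [orthonormal_iff_ite] at he hf ⊢
  rintro ⟨i, j⟩ ⟨i', j'⟩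
  rw [htm, he, hf]
  by_cases hi : i = i' <;> by_cases hj : j = j' <;> simp [hi, hj]

variable [CompleteSpace T]

noncomputable def HilbertBasis.tensor
    (htm : ∀ x x' y y', ⟪tm x y, tm x' y'⟫_𝕜 = ⟪x, x'⟫_𝕜 * ⟪y, y'⟫_𝕜)
    (htm_dense : Dense (span 𝕜 {z : T | ∃ x y, tm x y = z} : Set T))
    {ι κ : Type*} (e : HilbertBasis ι 𝕜 H) (f : HilbertBasis κ 𝕜 K) :
    HilbertBasis (ι × κ) 𝕜 T :=
  HilbertBasis.mk (e.orthonormal.tensor htm f.orthonormal) <| by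
    rw [← dense_iff_topologicalClosure_eq_top.1 htm_dense]
    refine topologicalClosure_minimal _ (span_le.2 ?_) (isClosed_topologicalClosure _)
    rintro _ ⟨x, y, rfl⟩
    exact (tm.mkContinuousOfInnerEqMul htm).apply_apply_mem_topologicalClosure_span
      e.dense_span f.dense_span x y

@[simp]
theorem HilbertBasis.tensor_apply
    (htm : ∀ x x' y y', ⟪tm x y, tm x' y'⟫_𝕜 = ⟪x, x'⟫_𝕜 * ⟪y, y'⟫_𝕜)
    (htm_dense : Dense (span 𝕜 {z : T | ∃ x y, tm x y = z} : Set T))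
    {ι κ : Type*} (e : HilbertBasis ι 𝕜 H) (f : HilbertBasis κ 𝕜 K) (p : ι × κ) :
    e.tensor htm htm_dense f p = tm (e p.1) (f p.2) := by
  simp [HilbertBasis.tensor]

variable [CompleteSpace H] [CompleteSpace K]

theorem IsFrame.summable_and_bounds_of_inner_tensor
    (htm : ∀ x x' y y', ⟪tm x y, tm x' y'⟫_𝕜 = ⟪x, x'⟫_𝕜 * ⟪y, y'⟫_𝕜)
    (htm_dense : Dense (span 𝕜 {z : T | ∃ x y, tm x y = z} : Set T))
    {ι : Type*} {x : ι → H} {A B : ℝ} (hx : IsFrame 𝕜 x A B) (z : T) {u : ι → K}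
    (hu : ∀ i y, ⟪u i, y⟫_𝕜 = ⟪z, tm (x i) y⟫_𝕜) :
    Summable (fun i => ‖u i‖ ^ 2) ∧
      A * ‖z‖ ^ 2 ≤ ∑' i, ‖u i‖ ^ 2 ∧ ∑' i, ‖u i‖ ^ 2 ≤ B * ‖z‖ ^ 2 := by
  obtain ⟨ιH, e, -⟩ := exists_hilbertBasis 𝕜 H
  obtain ⟨ιK, f, -⟩ := exists_hilbertBasis 𝕜 K
  set R : ιK → H := fun j => adjoint ((tm.mkContinuousOfInnerEqMul htm).flip (f j)) z
  have hR : ∀ j x', ⟪R j, x'⟫_𝕜 = ⟪z, tm x' (f j)⟫_𝕜 := fun j x' => adjoint_inner_left _ _ _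
  have hR_sum : HasSum (fun j => ‖R j‖ ^ 2) (‖z‖ ^ 2) := by
    have h := (e.tensor htm htm_dense f).hasSum_norm_inner_sq z
    simp only [HilbertBasis.tensor_apply] at h
    refine ((Equiv.prodComm ιK ιH).hasSum_iff.2 h).prod_fiberwise fun j => ?_
    have hj := e.hasSum_norm_inner_sq (R j)
    simp only [hR] at hj
    exact hj
  obtain ⟨hF, hlower, hupper⟩ := summable_and_bounds_of_fiberwise
    (F := fun p : ιK × ι => ‖⟪z, tm (x p.2) (f p.1)⟫_𝕜‖ ^ 2) (c := fun j => ‖R j‖ ^ 2)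
    (fun _ => by positivity) (fun j => by simpa only [hR] using (hx (R j)).1) hR_sum.summable
    (fun j => by simpa only [hR] using (hx (R j)).2.1)
    (fun j => by simpa only [hR] using (hx (R j)).2.2)
  rw [hR_sum.tsum_eq] at hlower hupper
  have hu_sum : HasSum (fun i => ‖u i‖ ^ 2) (∑' p : ιK × ι, ‖⟪z, tm (x p.2) (f p.1)⟫_𝕜‖ ^ 2) :=
    ((Equiv.prodComm ι ιK).hasSum_iff.2 hF.hasSum).prod_fiberwise fun i => by
      have hi := f.hasSum_norm_inner_sq (u i)
      simp only [hu] at hi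
      exact hi
  rw [hu_sum.tsum_eq]
  exact ⟨hu_sum.summable, hlower, hupper⟩

theorem IsFrame.tensor
    (htm : ∀ x x' y y', ⟪tm x y, tm x' y'⟫_𝕜 = ⟪x, x'⟫_𝕜 * ⟪y, y'⟫_𝕜)
    (htm_dense : Dense (span 𝕜 {z : T | ∃ x y, tm x y = z} : Set T))
    {ι κ : Type*} {x : ι → H} {y : κ → K} {A₁ B₁ A₂ B₂ : ℝ}
    (hx : IsFrame 𝕜 x A₁ B₁) (hy : IsFrame 𝕜 y A₂ B₂) (hA₂ : 0 ≤ A₂) (hB₂ : 0 ≤ B₂) :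
    IsFrame 𝕜 (fun p : ι × κ => tm (x p.1) (y p.2)) (A₁ * A₂) (B₁ * B₂) := by
  intro z
  set u : ι → K := fun i => adjoint (tm.mkContinuousOfInnerEqMul htm (x i)) z
  have hu : ∀ i y', ⟪u i, y'⟫_𝕜 = ⟪z, tm (x i) y'⟫_𝕜 := fun i y' => adjoint_inner_left _ _ _
  obtain ⟨hu_sum, hu_lower, hu_upper⟩ := hx.summable_and_bounds_of_inner_tensor htm htm_dense z hu
  simp only [← hu]
  obtain ⟨hsum, hlower, hupper⟩ := summable_and_bounds_of_fiberwise
    (F := fun p : ι × κ => ‖⟪u p.1, y p.2⟫_𝕜‖ ^ 2) (fun _ => by positivity)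
    (fun i => (hy (u i)).1) hu_sum (fun i => (hy (u i)).2.1) (fun i => (hy (u i)).2.2)
  refine ⟨hsum, ?_, ?_⟩
  · calc A₁ * A₂ * ‖z‖ ^ 2 = A₂ * (A₁ * ‖z‖ ^ 2) := by ring
      _ ≤ A₂ * ∑' i, ‖u i‖ ^ 2 := mul_le_mul_of_nonneg_left hu_lower hA₂
      _ ≤ _ := hlower
  · calc _ ≤ B₂ * ∑' i, ‖u i‖ ^ 2 := hupper
      _ ≤ B₂ * (B₁ * ‖z‖ ^ 2) := mul_le_mul_of_nonneg_left hu_upper hB₂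
      _ = B₁ * B₂ * ‖z‖ ^ 2 := by ring

end TensorStructure

theorem tensor_product_frame_representation_bounds_general
    {H K T : Type*}
    [NormedAddCommGroup H] [InnerProductSpace ℂ H] [CompleteSpace H]
    [NormedAddCommGroup K] [InnerProductSpace ℂ K] [CompleteSpace K]
    [NormedAddCommGroup T] [InnerProductSpace ℂ T] [CompleteSpace T]
    {G₁ G₂ : Type*} [CommGroup G₁] [CommGroup G₂]
    -- the tensor product structure
    (tm : H →ₗ[ℂ] K →ₗ[ℂ] T)
    (htm_inner : ∀ (x x' : H) (y y' : K),
      (inner ℂ (tm x y) (tm x' y') : ℂ) = (inner ℂ x x' : ℂ) * (inner ℂ y y' : ℂ))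
    (htm_dense : Dense (Submodule.span ℂ {z : T | ∃ x y, tm x y = z} : Set T))
    -- the unitary representations
    (π : G₁ →* (H ≃ₗᵢ[ℂ] H)) (σ : G₂ →* (K ≃ₗᵢ[ℂ] K))
    -- the frame vectors and frame bounds
    (v : H) (w : K) (A₁ B₁ A₂ B₂ : ℝ)
    (hA₂ : 0 < A₂) (hAB₂ : A₂ ≤ B₂)
    (hv_sum : ∀ x : H, Summable fun g => ‖(inner ℂ x (π g v) : ℂ)‖ ^ 2)
    (hv_lower : ∀ x : H, A₁ * ‖x‖ ^ 2 ≤ ∑' g, ‖(inner ℂ x (π g v) : ℂ)‖ ^ 2)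
    (hv_upper : ∀ x : H, ∑' g, ‖(inner ℂ x (π g v) : ℂ)‖ ^ 2 ≤ B₁ * ‖x‖ ^ 2)
    (hw_sum : ∀ y : K, Summable fun h => ‖(inner ℂ y (σ h w) : ℂ)‖ ^ 2)
    (hw_lower : ∀ y : K, A₂ * ‖y‖ ^ 2 ≤ ∑' h, ‖(inner ℂ y (σ h w) : ℂ)‖ ^ 2)
    (hw_upper : ∀ y : K, ∑' h, ‖(inner ℂ y (σ h w) : ℂ)‖ ^ 2 ≤ B₂ * ‖y‖ ^ 2)
    -- the tensor product representation `π ⊗ σ` of `G₁ ⊕ G₂` on `T = H ⊗ K`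
    (τ : (G₁ × G₂) →* (T ≃ₗᵢ[ℂ] T))
    (hτ : ∀ (g : G₁) (h : G₂) (x : H) (y : K), τ (g, h) (tm x y) = tm (π g x) (σ h y)) :
    -- conclusion: `{(π⊗σ)(g,h)(v⊗w)}` is a frame for `H ⊗ K` with bounds `A₁A₂, B₁B₂`
    ∀ z : T,
      Summable (fun p : G₁ × G₂ => ‖(inner ℂ z (τ p (tm v w)) : ℂ)‖ ^ 2) ∧
      A₁ * A₂ * ‖z‖ ^ 2 ≤ ∑' p : G₁ × G₂, ‖(inner ℂ z (τ p (tm v w)) : ℂ)‖ ^ 2 ∧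
      ∑' p : G₁ × G₂, ‖(inner ℂ z (τ p (tm v w)) : ℂ)‖ ^ 2 ≤ B₁ * B₂ * ‖z‖ ^ 2 := by
  have hv : IsFrame ℂ (fun g => π g v) A₁ B₁ := fun x => ⟨hv_sum x, hv_lower x, hv_upper x⟩
  have hw : IsFrame ℂ (fun h => σ h w) A₂ B₂ := fun y => ⟨hw_sum y, hw_lower y, hw_upper y⟩
  have horbit : (fun p : G₁ × G₂ => τ p (tm v w)) = fun p => tm (π p.1 v) (σ p.2 w) :=
    funext fun p => hτ p.1 p.2 v w
  have h := hv.tensor htm_inner htm_dense hw hA₂.le (hA₂.le.trans hAB₂)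
  rwa [← horbit] at h

/-- If `{π(g)v}` is a frame for `H` with bounds `A₁, B₁` and `{σ(h)w}` is a
frame for `K` with bounds `A₂, B₂` (for unitary representations `π, σ` of countable
discrete abelian groups `G₁, G₂`), then `{(π⊗σ)(g,h)(v⊗w)}` is a frame for the Hilbert
space tensor product `H ⊗ K` with bounds `A₁A₂` and `B₁B₂`. -/
theorem tensor_product_frame_representation_bounds
    {H K T : Type*}
    [NormedAddCommGroup H] [InnerProductSpace ℂ H] [CompleteSpace H]
      [TopologicalSpace.SeparableSpace H]
    [NormedAddCommGroup K] [InnerProductSpace ℂ K] [CompleteSpace K]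
      [TopologicalSpace.SeparableSpace K]
    [NormedAddCommGroup T] [InnerProductSpace ℂ T] [CompleteSpace T]
    {G₁ G₂ : Type*} [CommGroup G₁] [Countable G₁] [CommGroup G₂] [Countable G₂]
    -- the tensor product structure
    (tm : H →ₗ[ℂ] K →ₗ[ℂ] T)
    (htm_inner : ∀ (x x' : H) (y y' : K),
      (inner ℂ (tm x y) (tm x' y') : ℂ) = (inner ℂ x x' : ℂ) * (inner ℂ y y' : ℂ))
    (htm_dense : Dense (Submodule.span ℂ {z : T | ∃ x y, tm x y = z} : Set T))
    -- the unitary representations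
    (π : G₁ →* (H ≃ₗᵢ[ℂ] H)) (σ : G₂ →* (K ≃ₗᵢ[ℂ] K))
    -- the frame vectors and frame bounds
    (v : H) (w : K) (A₁ B₁ A₂ B₂ : ℝ)
    (hA₁ : 0 < A₁) (hAB₁ : A₁ ≤ B₁) (hA₂ : 0 < A₂) (hAB₂ : A₂ ≤ B₂)
    (hv_sum : ∀ x : H, Summable fun g => ‖(inner ℂ x (π g v) : ℂ)‖ ^ 2)
    (hv_lower : ∀ x : H, A₁ * ‖x‖ ^ 2 ≤ ∑' g, ‖(inner ℂ x (π g v) : ℂ)‖ ^ 2)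
    (hv_upper : ∀ x : H, ∑' g, ‖(inner ℂ x (π g v) : ℂ)‖ ^ 2 ≤ B₁ * ‖x‖ ^ 2)
    (hw_sum : ∀ y : K, Summable fun h => ‖(inner ℂ y (σ h w) : ℂ)‖ ^ 2)
    (hw_lower : ∀ y : K, A₂ * ‖y‖ ^ 2 ≤ ∑' h, ‖(inner ℂ y (σ h w) : ℂ)‖ ^ 2)
    (hw_upper : ∀ y : K, ∑' h, ‖(inner ℂ y (σ h w) : ℂ)‖ ^ 2 ≤ B₂ * ‖y‖ ^ 2)
    -- the tensor product representation `π ⊗ σ` of `G₁ ⊕ G₂` on `T = H ⊗ K`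
    (τ : (G₁ × G₂) →* (T ≃ₗᵢ[ℂ] T))
    (hτ : ∀ (g : G₁) (h : G₂) (x : H) (y : K), τ (g, h) (tm x y) = tm (π g x) (σ h y)) :
    -- conclusion: `{(π⊗σ)(g,h)(v⊗w)}` is a frame for `H ⊗ K` with bounds `A₁A₂, B₁B₂`
    ∀ z : T,
      Summable (fun p : G₁ × G₂ => ‖(inner ℂ z (τ p (tm v w)) : ℂ)‖ ^ 2) ∧
      A₁ * A₂ * ‖z‖ ^ 2 ≤ ∑' p : G₁ × G₂, ‖(inner ℂ z (τ p (tm v w)) : ℂ)‖ ^ 2 ∧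
      ∑' p : G₁ × G₂, ‖(inner ℂ z (τ p (tm v w)) : ℂ)‖ ^ 2 ≤ B₁ * B₂ * ‖z‖ ^ 2 :=
  tensor_product_frame_representation_bounds_general tm htm_inner htm_dense π σ v w A₁ B₁ A₂ B₂ hA₂
    hAB₂ hv_sum hv_lower hv_upper hw_sum hw_lower hw_upper τ hτ
end

section
/- Let H and K be Hilbert spaces. If {u_i}_{i∈I} is a frame for H with frame bounds A and B, and {v_j}_{j∈J} is a frame for K with frame bounds C and D, then {u_i ⊗ v_j}_{i∈I, j∈J} is a frame for the Hilbert space tensor product H⊗K with frame bounds AC and BD; that is, for all z ∈ H⊗K, AC‖z‖² ≤ Σ_{i∈I}Σ_{j∈J} |⟨z, u_i⊗v_j⟩|² ≤ BD‖z‖². -/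
/-!
For `z = ∑ₘ xₘ ⊗ eₘ` with `(eₘ)` orthonormal we have `‖z‖² = ∑ₘ ‖xₘ‖²` and
`⟪z, uᵢ ⊗ y⟫ = ⟪wᵢ, y⟫` with `wᵢ = ∑ₘ conj ⟪xₘ, uᵢ⟫ eₘ`. Summing over `j` first, the frame
bounds of `v` applied to each `wᵢ` give `C ‖wᵢ‖²` and `D ‖wᵢ‖²`, and
`∑ᵢ ‖wᵢ‖² = ∑ₘ ∑ᵢ |⟪xₘ, uᵢ⟫|²` lies between `A ‖z‖²` and `B ‖z‖²` by the frame bounds of `u`.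
Every vector in the span of the elementary tensors has this form after orthonormalising the
second factors. The bounds then extend from this dense span to the whole space: the finite partial
sums are continuous in `z`, and once the upper bound holds everywhere the analysis operator
`z ↦ (⟪z, uᵢ ⊗ vⱼ⟫)ᵢⱼ` into `ℓ²` is bounded, which makes the lower bound a closed condition.
-/

open scoped ComplexConjugate InnerProductSpace

section Frames

variable (𝕜 : Type*) [RCLike 𝕜] {E ι : Type*} [NormedAddCommGroup E] [InnerProductSpace 𝕜 E]

def FrameBoundsAt (f : ι → E) (a b : ℝ) (x : E) : Prop :=
  Summable (fun i => ‖⟪x, f i⟫_𝕜‖ ^ 2) ∧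
    a * ‖x‖ ^ 2 ≤ ∑' i, ‖⟪x, f i⟫_𝕜‖ ^ 2 ∧ ∑' i, ‖⟪x, f i⟫_𝕜‖ ^ 2 ≤ b * ‖x‖ ^ 2

variable {𝕜}

theorem FrameBoundsAt.sum_le {f : ι → E} {a b : ℝ} {x : E} (h : FrameBoundsAt 𝕜 f a b x)
    (s : Finset ι) : ∑ i ∈ s, ‖⟪x, f i⟫_𝕜‖ ^ 2 ≤ b * ‖x‖ ^ 2 :=
  (h.1.sum_le_tsum s fun _ _ => by positivity).trans h.2.2

theorem sum_sq_norm_inner_le_of_dense {s : Set E} (hs : Dense s) {f : ι → E} {b : ℝ}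
    (h : ∀ x ∈ s, ∀ t : Finset ι, ∑ i ∈ t, ‖⟪x, f i⟫_𝕜‖ ^ 2 ≤ b * ‖x‖ ^ 2)
    (x : E) (t : Finset ι) : ∑ i ∈ t, ‖⟪x, f i⟫_𝕜‖ ^ 2 ≤ b * ‖x‖ ^ 2 := by
  refine hs.induction (fun x hx => h x hx t) (isClosed_le ?_ ?_) x <;> fun_prop

def analysisOp (f : ι → E) (hf : ∀ x, Summable fun i => ‖⟪x, f i⟫_𝕜‖ ^ 2) :
    E →ₗ⋆[𝕜] lp (fun _ : ι => 𝕜) 2 where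
  toFun x := ⟨fun i => ⟪x, f i⟫_𝕜, memℓp_gen (by simpa using hf x)⟩
  map_add' x y := lp.ext <| funext fun i => inner_add_left x y (f i)
  map_smul' c x := lp.ext <| funext fun i => inner_smul_left x (f i) c

theorem norm_analysisOp_sq (f : ι → E) (hf : ∀ x, Summable fun i => ‖⟪x, f i⟫_𝕜‖ ^ 2) (x : E) :
    ‖analysisOp f hf x‖ ^ 2 = ∑' i, ‖⟪x, f i⟫_𝕜‖ ^ 2 := by
  have h := lp.norm_rpow_eq_tsum (p := 2) (by norm_num) (analysisOp f hf x)
  simp only [ENNReal.toReal_ofNat, Real.rpow_two] at h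
  exact h

theorem frameBoundsAt_of_dense {s : Set E} (hs : Dense s) {f : ι → E} {a b : ℝ}
    (h : ∀ x ∈ s, FrameBoundsAt 𝕜 f a b x) (x : E) : FrameBoundsAt 𝕜 f a b x := by
  have hsum_le := sum_sq_norm_inner_le_of_dense hs fun x hx => (h x hx).sum_le
  have hsum : ∀ x, Summable fun i => ‖⟪x, f i⟫_𝕜‖ ^ 2 := fun x =>
    summable_of_sum_le (fun _ => by positivity) (hsum_le x)
  have hupper : ∀ x, ∑' i, ‖⟪x, f i⟫_𝕜‖ ^ 2 ≤ b * ‖x‖ ^ 2 := fun x =>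
    (hsum x).tsum_le_of_sum_le (hsum_le x)
  have hcont : Continuous (analysisOp f hsum) := by
    refine AddMonoidHomClass.continuous_of_bound _ √b fun x => ?_
    rw [← Real.sqrt_sq (norm_nonneg _), norm_analysisOp_sq, ← Real.sqrt_sq (norm_nonneg x),
      ← Real.sqrt_mul' _ (sq_nonneg _)]
    exact Real.sqrt_le_sqrt (hupper x)
  have hlower : ∀ x, a * ‖x‖ ^ 2 ≤ ‖analysisOp f hsum x‖ ^ 2 := by
    refine hs.induction (fun x hx => ?_) (isClosed_le (by fun_prop) (by fun_prop))
    exact (norm_analysisOp_sq f hsum x).symm ▸ (h x hx).2.1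
  exact ⟨hsum x, norm_analysisOp_sq f hsum x ▸ hlower x, hupper x⟩

end Frames

theorem summable_prod_of_fiber_bounds {α β : Type*} {g : α × β → ℝ} (hg : 0 ≤ g) {w : α → ℝ}
    {c d : ℝ} (hw : Summable w) (hfiber : ∀ i, Summable fun j => g (i, j))
    (hlower : ∀ i, c * w i ≤ ∑' j, g (i, j)) (hupper : ∀ i, ∑' j, g (i, j) ≤ d * w i) :
    Summable g ∧ c * ∑' i, w i ≤ ∑' p, g p ∧ ∑' p, g p ≤ d * ∑' i, w i := by
  have houter : Summable fun i => ∑' j, g (i, j) :=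
    (hw.mul_left d).of_nonneg_of_le (fun i => tsum_nonneg fun j => hg _) hupper
  have hg_sum : Summable g := (summable_prod_of_nonneg hg).mpr ⟨hfiber, houter⟩
  refine ⟨hg_sum, ?_, ?_⟩ <;> rw [hg_sum.tsum_prod, ← tsum_mul_left]
  · exact (hw.mul_left c).tsum_le_tsum hlower houter
  · exact houter.tsum_le_tsum hupper (hw.mul_left d)

section Orthonormal

variable {𝕜 E ι : Type*} [RCLike 𝕜] [NormedAddCommGroup E] [InnerProductSpace 𝕜 E]

theorem Orthonormal.norm_sum_smul_sq [Fintype ι] {e : ι → E} (he : Orthonormal 𝕜 e) (c : ι → 𝕜) :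
    ‖∑ m, c m • e m‖ ^ 2 = ∑ m, ‖c m‖ ^ 2 := by
  have h := he.inner_sum c c Finset.univ
  simp only [inner_self_eq_norm_sq_to_K, RCLike.conj_mul] at h
  exact_mod_cast h

theorem exists_orthonormal_expansion [Fintype ι] (y : ι → E) :
    ∃ (n : ℕ) (e : Fin n → E) (c : ι → Fin n → 𝕜),
      Orthonormal 𝕜 e ∧ ∀ k, ∑ m, c k m • e m = y k := by
  set W := Submodule.span 𝕜 (Set.range y)
  have hmem : ∀ k, y k ∈ W := fun k => Submodule.subset_span (Set.mem_range_self k)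
  have : FiniteDimensional 𝕜 W := .span_of_finite 𝕜 (Set.finite_range y)
  let b := stdOrthonormalBasis 𝕜 W
  refine ⟨_, W.subtypeₗᵢ ∘ b, fun k => b.repr ⟨y k, hmem k⟩, b.orthonormal.comp_linearIsometry _,
    fun k => ?_⟩
  simpa using congrArg W.subtypeₗᵢ (b.sum_repr ⟨y k, hmem k⟩)

end Orthonormal

section TensorProduct

variable {𝕜 H K T ι : Type*} [RCLike 𝕜] [NormedAddCommGroup H] [InnerProductSpace 𝕜 H]
  [NormedAddCommGroup K] [InnerProductSpace 𝕜 K] [NormedAddCommGroup T] [InnerProductSpace 𝕜 T]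
  [Fintype ι] {tm : H →ₗ[𝕜] K →ₗ[𝕜] T}

theorem inner_sum_tm_left (htm : ∀ x x' y y', ⟪tm x y, tm x' y'⟫_𝕜 = ⟪x, x'⟫_𝕜 * ⟪y, y'⟫_𝕜)
    (x : ι → H) (e : ι → K) (h : H) (y : K) :
    ⟪∑ m, tm (x m) (e m), tm h y⟫_𝕜 = ⟪∑ m, conj ⟪x m, h⟫_𝕜 • e m, y⟫_𝕜 := by
  simp only [sum_inner, inner_smul_left, htm, RCLike.conj_conj]

theorem norm_sum_tm_sq (htm : ∀ x x' y y', ⟪tm x y, tm x' y'⟫_𝕜 = ⟪x, x'⟫_𝕜 * ⟪y, y'⟫_𝕜)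
    (x : ι → H) {e : ι → K} (he : Orthonormal 𝕜 e) :
    ‖∑ m, tm (x m) (e m)‖ ^ 2 = ∑ m, ‖x m‖ ^ 2 := by
  have h : ⟪∑ m, tm (x m) (e m), ∑ m, tm (x m) (e m)⟫_𝕜 = ∑ m, ⟪x m, x m⟫_𝕜 := by
    simp only [sum_inner, inner_sum, htm]
    exact he.inner_left_right_finset (a := fun i j => ⟪x j, x i⟫_𝕜)
  simp only [inner_self_eq_norm_sq_to_K] at h
  exact_mod_cast h

theorem frameBoundsAt_sum_tm (htm : ∀ x x' y y', ⟪tm x y, tm x' y'⟫_𝕜 = ⟪x, x'⟫_𝕜 * ⟪y, y'⟫_𝕜)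
    {I J : Type*} {u : I → H} {v : J → K} {A B C D : ℝ} (hC : 0 ≤ C) (hD : 0 ≤ D)
    (hu : ∀ x, FrameBoundsAt 𝕜 u A B x) (hv : ∀ y, FrameBoundsAt 𝕜 v C D y)
    (x : ι → H) {e : ι → K} (he : Orthonormal 𝕜 e) :
    FrameBoundsAt 𝕜 (fun p : I × J => tm (u p.1) (v p.2)) (A * C) (B * D)
      (∑ m, tm (x m) (e m)) := by
  set z := ∑ m, tm (x m) (e m)
  set w : I → K := fun i => ∑ m, conj ⟪x m, u i⟫_𝕜 • e m
  have hw_norm : ∀ i, ‖w i‖ ^ 2 = ∑ m, ‖⟪x m, u i⟫_𝕜‖ ^ 2 := fun i => by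
    simp only [w, he.norm_sum_smul_sq, RCLike.norm_conj]
  have hw_sum : Summable fun i => ‖w i‖ ^ 2 := by
    simpa only [hw_norm] using summable_sum fun m _ => (hu (x m)).1
  have hw_tsum : ∑' i, ‖w i‖ ^ 2 = ∑ m, ∑' i, ‖⟪x m, u i⟫_𝕜‖ ^ 2 := by
    simpa only [hw_norm] using Summable.tsum_finsetSum fun m _ => (hu (x m)).1
  have hz_norm : ‖z‖ ^ 2 = ∑ m, ‖x m‖ ^ 2 := norm_sum_tm_sq htm x he
  obtain ⟨hsum, hlower, hupper⟩ := summable_prod_of_fiber_bounds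
    (g := fun p : I × J => ‖⟪w p.1, v p.2⟫_𝕜‖ ^ 2) (fun _ => by positivity) hw_sum
    (fun i => (hv (w i)).1) (fun i => (hv (w i)).2.1) (fun i => (hv (w i)).2.2)
  simp only [FrameBoundsAt, z, inner_sum_tm_left htm]
  refine ⟨hsum, ?_, ?_⟩
  · calc A * C * ‖z‖ ^ 2 = C * ∑ m, A * ‖x m‖ ^ 2 := by rw [hz_norm, ← Finset.mul_sum]; ring
      _ ≤ C * ∑' i, ‖w i‖ ^ 2 := by
        rw [hw_tsum]
        gcongr with m
        exact (hu (x m)).2.1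
      _ ≤ _ := hlower
  · calc _ ≤ D * ∑' i, ‖w i‖ ^ 2 := hupper
      _ ≤ D * ∑ m, B * ‖x m‖ ^ 2 := by
        rw [hw_tsum]
        gcongr with m
        exact (hu (x m)).2.2
      _ = B * D * ‖z‖ ^ 2 := by rw [hz_norm, ← Finset.mul_sum]; ring

theorem exists_orthonormal_sum_tm_eq {z : T}
    (hz : z ∈ Submodule.span 𝕜 {z : T | ∃ x y, tm x y = z}) :
    ∃ (n : ℕ) (x : Fin n → H) (e : Fin n → K), Orthonormal 𝕜 e ∧ ∑ m, tm (x m) (e m) = z := by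
  obtain ⟨n, c, g, rfl⟩ := Submodule.mem_span_set'.mp hz
  choose x y hxy using fun k => (g k).2
  obtain ⟨N, e, d, he, hy⟩ := exists_orthonormal_expansion (𝕜 := 𝕜) y
  refine ⟨N, fun m => ∑ k, d k m • c k • x k, e, he, ?_⟩
  calc ∑ m, tm (∑ k, d k m • c k • x k) (e m) = ∑ k, tm (c k • x k) (∑ m, d k m • e m) := by
        simp only [map_sum, map_smul, LinearMap.sum_apply, LinearMap.smul_apply]
        exact Finset.sum_comm
    _ = ∑ k, c k • (g k : T) := by simp only [hy, map_smul, LinearMap.smul_apply, hxy]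

end TensorProduct

theorem tensor_product_frame_of_frames_general
    {H K T : Type*}
    [NormedAddCommGroup H] [InnerProductSpace ℂ H]
    [NormedAddCommGroup K] [InnerProductSpace ℂ K]
    [NormedAddCommGroup T] [InnerProductSpace ℂ T]
    {I J : Type*}
    -- the tensor product structure
    (tm : H →ₗ[ℂ] K →ₗ[ℂ] T)
    (htm_inner : ∀ (x x' : H) (y y' : K),
      (inner ℂ (tm x y) (tm x' y') : ℂ) = (inner ℂ x x' : ℂ) * (inner ℂ y y' : ℂ))
    (htm_dense : Dense (Submodule.span ℂ {z : T | ∃ x y, tm x y = z} : Set T))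
    -- the frames
    (u : I → H) (v : J → K) (A B C D : ℝ)
    (hC : 0 < C) (hCD : C ≤ D)
    (hu_sum : ∀ x : H, Summable fun i => ‖(inner ℂ x (u i) : ℂ)‖ ^ 2)
    (hu_lower : ∀ x : H, A * ‖x‖ ^ 2 ≤ ∑' i, ‖(inner ℂ x (u i) : ℂ)‖ ^ 2)
    (hu_upper : ∀ x : H, ∑' i, ‖(inner ℂ x (u i) : ℂ)‖ ^ 2 ≤ B * ‖x‖ ^ 2)
    (hv_sum : ∀ y : K, Summable fun j => ‖(inner ℂ y (v j) : ℂ)‖ ^ 2)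
    (hv_lower : ∀ y : K, C * ‖y‖ ^ 2 ≤ ∑' j, ‖(inner ℂ y (v j) : ℂ)‖ ^ 2)
    (hv_upper : ∀ y : K, ∑' j, ‖(inner ℂ y (v j) : ℂ)‖ ^ 2 ≤ D * ‖y‖ ^ 2) :
    ∀ z : T,
      Summable (fun p : I × J => ‖(inner ℂ z (tm (u p.1) (v p.2)) : ℂ)‖ ^ 2) ∧
      A * C * ‖z‖ ^ 2 ≤ ∑' p : I × J, ‖(inner ℂ z (tm (u p.1) (v p.2)) : ℂ)‖ ^ 2 ∧
      ∑' p : I × J, ‖(inner ℂ z (tm (u p.1) (v p.2)) : ℂ)‖ ^ 2 ≤ B * D * ‖z‖ ^ 2 := by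
  have hu : ∀ x, FrameBoundsAt ℂ u A B x := fun x => ⟨hu_sum x, hu_lower x, hu_upper x⟩
  have hv : ∀ y, FrameBoundsAt ℂ v C D y := fun y => ⟨hv_sum y, hv_lower y, hv_upper y⟩
  refine frameBoundsAt_of_dense htm_dense fun z hz => ?_
  obtain ⟨n, x, e, he, rfl⟩ := exists_orthonormal_sum_tm_eq hz
  exact frameBoundsAt_sum_tm htm_inner hC.le (hC.le.trans hCD) hu hv x he

/-- If `{u i}` is a frame for the Hilbert space `H` with bounds `A, B` and
`{v j}` is a frame for the Hilbert space `K` with bounds `C, D`, then `{u i ⊗ v j}` is a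
frame for the Hilbert space tensor product `H ⊗ K` with bounds `A*C, B*D`.  The Hilbert
space tensor product is encoded as a Hilbert space `T` together with a bilinear map
`tm : H → K → T` satisfying `⟪x⊗y, x'⊗y'⟫ = ⟪x,x'⟫⟪y,y'⟫` whose range spans a dense
subspace. -/
theorem tensor_product_frame_of_frames
    {H K T : Type*}
    [NormedAddCommGroup H] [InnerProductSpace ℂ H] [CompleteSpace H]
    [NormedAddCommGroup K] [InnerProductSpace ℂ K] [CompleteSpace K]
    [NormedAddCommGroup T] [InnerProductSpace ℂ T] [CompleteSpace T]
    {I J : Type*} [Countable I] [Countable J]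
    -- the tensor product structure
    (tm : H →ₗ[ℂ] K →ₗ[ℂ] T)
    (htm_inner : ∀ (x x' : H) (y y' : K),
      (inner ℂ (tm x y) (tm x' y') : ℂ) = (inner ℂ x x' : ℂ) * (inner ℂ y y' : ℂ))
    (htm_dense : Dense (Submodule.span ℂ {z : T | ∃ x y, tm x y = z} : Set T))
    -- the frames
    (u : I → H) (v : J → K) (A B C D : ℝ)
    (hA : 0 < A) (hAB : A ≤ B) (hC : 0 < C) (hCD : C ≤ D)
    (hu_sum : ∀ x : H, Summable fun i => ‖(inner ℂ x (u i) : ℂ)‖ ^ 2)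
    (hu_lower : ∀ x : H, A * ‖x‖ ^ 2 ≤ ∑' i, ‖(inner ℂ x (u i) : ℂ)‖ ^ 2)
    (hu_upper : ∀ x : H, ∑' i, ‖(inner ℂ x (u i) : ℂ)‖ ^ 2 ≤ B * ‖x‖ ^ 2)
    (hv_sum : ∀ y : K, Summable fun j => ‖(inner ℂ y (v j) : ℂ)‖ ^ 2)
    (hv_lower : ∀ y : K, C * ‖y‖ ^ 2 ≤ ∑' j, ‖(inner ℂ y (v j) : ℂ)‖ ^ 2)
    (hv_upper : ∀ y : K, ∑' j, ‖(inner ℂ y (v j) : ℂ)‖ ^ 2 ≤ D * ‖y‖ ^ 2) :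
    ∀ z : T,
      Summable (fun p : I × J => ‖(inner ℂ z (tm (u p.1) (v p.2)) : ℂ)‖ ^ 2) ∧
      A * C * ‖z‖ ^ 2 ≤ ∑' p : I × J, ‖(inner ℂ z (tm (u p.1) (v p.2)) : ℂ)‖ ^ 2 ∧
      ∑' p : I × J, ‖(inner ℂ z (tm (u p.1) (v p.2)) : ℂ)‖ ^ 2 ≤ B * D * ‖z‖ ^ 2 :=
  tensor_product_frame_of_frames_general tm htm_inner htm_dense u v A B C D hC hCD hu_sum hu_lower
    hu_upper hv_sum hv_lower hv_upper
end
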